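/- arXiv:1010.3938 — 17 statements merged into one kernel-verified Lean document; each statement's English description precedes it below -/
import Mathlib

section
/- Let p and q be distinct primes. Then the coefficients of the binary cyclotomic polynomial Φ_{pq}(x) all lie in {-1, 0, 1}. -/
open Polynomial

theorem stmt_0 (p q : ℕ) (hp : p.Prime) (hq : q.Prime) (hpq : p ≠ q) (k : ℕ) :
    (Polynomial.cyclotomic (p * q) ℤ).coeff k ∈ ({-1, 0, 1} : Set ℤ) := by
  haveI : Fact p.Prime := ⟨hp⟩
  haveI : Fact q.Prime := ⟨hq⟩
  have hcop : Nat.Coprime p q := (Nat.coprime_primes hp hq).mpr hpq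
  have hnd : ¬ p ∣ q := fun h => hpq ((Nat.prime_dvd_prime_iff_eq hp hq).mp h)
  set A : ℤ[X] := expand ℤ p (cyclotomic q ℤ) with hAdef
  -- polynomial identity
  have hid : (cyclotomic (p*q) ℤ) * ((X:ℤ[X])^q - 1) = A * (X - 1) := by
    rw [hAdef, cyclotomic_expand_eq_cyclotomic_mul hp hnd, mul_assoc,
      cyclotomic_prime_mul_X_sub_one, mul_comm q p]
  set S : PowerSeries ℤ := PowerSeries.mk fun n => if q ∣ n then 1 else 0 with hSdef
  have hq0 : 0 < q := hq.pos
  have hS : (1 - (PowerSeries.X : PowerSeries ℤ)^q) * S = 1 := by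
    ext n
    rw [sub_mul, one_mul, map_sub, PowerSeries.coeff_X_pow_mul' S q n,
      PowerSeries.coeff_mk, PowerSeries.coeff_one]
    by_cases hn : q ≤ n
    · have h1 : q ∣ n ↔ q ∣ n - q := by
        constructor
        · intro h; exact Nat.dvd_sub h dvd_rfl
        · intro h
          have : n = (n - q) + q := by omega
          rw [this]; exact Nat.dvd_add h dvd_rfl
      have hn0 : n ≠ 0 := by omega
      rw [if_pos hn, hSdef, PowerSeries.coeff_mk]
      by_cases hd : q ∣ n
      · rw [if_pos hd, if_pos (h1.mp hd), if_neg hn0, sub_self]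
      · rw [if_neg hd, if_neg (fun h => hd (h1.mpr h)), if_neg hn0, sub_self]
    · have h2 : q ∣ n ↔ n = 0 := by
        constructor
        · intro h
          rcases Nat.eq_zero_or_pos n with h0 | h0
          · exact h0
          · exact absurd (Nat.le_of_dvd h0 h) hn
        · rintro rfl; exact dvd_zero q
      simp [hn, h2]
  -- coerce identity to power series
  have h3 : (cyclotomic (p*q) ℤ : PowerSeries ℤ) * ((PowerSeries.X : PowerSeries ℤ)^q - 1)
      = (A : PowerSeries ℤ) * (PowerSeries.X - 1) := by
    have := congrArg (fun f : ℤ[X] => (f : PowerSeries ℤ)) hid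
    simpa only [Polynomial.coe_mul, Polynomial.coe_sub, Polynomial.coe_pow,
      Polynomial.coe_X, Polynomial.coe_one] using this
  have hid2 : (cyclotomic (p*q) ℤ : PowerSeries ℤ)
      = (1 - PowerSeries.X) * ((A : PowerSeries ℤ) * S) := by
    calc (cyclotomic (p*q) ℤ : PowerSeries ℤ)
        = (cyclotomic (p*q) ℤ : PowerSeries ℤ) * ((1 - (PowerSeries.X : PowerSeries ℤ)^q) * S) := by
          rw [hS, mul_one]
      _ = ((cyclotomic (p*q) ℤ : PowerSeries ℤ) * ((PowerSeries.X : PowerSeries ℤ)^q - 1)) * (-S) := by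
          ring
      _ = ((A : PowerSeries ℤ) * (PowerSeries.X - 1)) * (-S) := by rw [h3]
      _ = (1 - PowerSeries.X) * ((A : PowerSeries ℤ) * S) := by ring
  -- coefficients of A
  have hA : ∀ m, (A : ℤ[X]).coeff m = if p ∣ m ∧ m / p < q then 1 else 0 := by
    intro m
    rw [hAdef, Polynomial.coeff_expand hp.pos, cyclotomic_prime ℤ q]
    by_cases hd : p ∣ m
    · simp only [hd, if_true, true_and]
      rw [Polynomial.finset_sum_coeff]
      simp only [Polynomial.coeff_X_pow]
      rw [Finset.sum_ite_eq (Finset.range q) (m / p) (fun _ => (1:ℤ))]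
      simp [Finset.mem_range]
    · simp [hd]
  -- the product A * S has coefficients in {0,1}
  have hT : ∀ n, (PowerSeries.coeff n ((A : PowerSeries ℤ) * S)) ∈ ({0,1} : Set ℤ) := by
    intro n
    rw [PowerSeries.coeff_mul]
    have heq : ∀ x ∈ Finset.HasAntidiagonal.antidiagonal n,
        (PowerSeries.coeff x.1 (A : PowerSeries ℤ)) * (PowerSeries.coeff x.2 S)
        = if (p ∣ x.1 ∧ x.1 / p < q ∧ q ∣ x.2) then 1 else 0 := by
      intro x _
      rw [Polynomial.coeff_coe, hA x.1, hSdef, PowerSeries.coeff_mk]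
      by_cases h1 : p ∣ x.1 ∧ x.1 / p < q <;> by_cases h2 : q ∣ x.2 <;>
        simp [h1, h2]
    rw [Finset.sum_congr rfl heq, Finset.sum_boole]
    have hcard : (Finset.filter (fun x => p ∣ x.1 ∧ x.1 / p < q ∧ q ∣ x.2)
        (Finset.HasAntidiagonal.antidiagonal n)).card ≤ 1 := by
      apply Finset.card_le_one.mpr
      intro a ha b hb
      obtain ⟨u1, v1⟩ := a
      obtain ⟨u2, v2⟩ := b
      simp only [Finset.mem_filter, Finset.HasAntidiagonal.mem_antidiagonal] at ha hb
      obtain ⟨hab, ⟨i1d, i1lt, v1d⟩⟩ := ha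
      obtain ⟨hbb, ⟨i2d, i2lt, v2d⟩⟩ := hb
      obtain ⟨i1, rfl⟩ := i1d
      obtain ⟨i2, rfl⟩ := i2d
      obtain ⟨t1, rfl⟩ := v1d
      obtain ⟨t2, rfl⟩ := v2d
      rw [Nat.mul_div_cancel_left _ hp.pos] at i1lt i2lt
      have hmod : (p * i1) % q = (p * i2) % q := by
        have h1 : (p * i1 + q * t1) % q = (p * i1) % q := by
          rw [Nat.add_mul_mod_self_left]
        have h2 : (p * i2 + q * t2) % q = (p * i2) % q := by
          rw [Nat.add_mul_mod_self_left]
        rw [← h1, ← h2, hab, hbb]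
      have hieq : i1 = i2 := by
        have hME : Nat.ModEq q (p * i1) (p * i2) := hmod
        have := hME.cancel_left_of_coprime (by rwa [Nat.coprime_comm] at hcop)
        have h1 := Nat.mod_eq_of_lt i1lt
        have h2 := Nat.mod_eq_of_lt i2lt
        unfold Nat.ModEq at this
        omega
      subst hieq
      have h5 : p * i1 + q * t1 = p * i1 + q * t2 := hab.trans hbb.symm
      have h6 : q * t1 = q * t2 := Nat.add_left_cancel h5
      have : t1 = t2 := Nat.eq_of_mul_eq_mul_left hq0 h6
      subst this
      rfl
    interval_cases h : (Finset.filter (fun x => p ∣ x.1 ∧ x.1 / p < q ∧ q ∣ x.2)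
        (Finset.HasAntidiagonal.antidiagonal n)).card
    · simp
    · simp
  -- conclude
  have hco : (cyclotomic (p*q) ℤ).coeff k
      = PowerSeries.coeff k ((cyclotomic (p*q) ℤ : PowerSeries ℤ)) := (Polynomial.coeff_coe _ _).symm
  rw [hco, hid2, sub_mul, one_mul, map_sub]
  cases k with
  | zero =>
    have hx : (PowerSeries.coeff 0) (PowerSeries.X * ((A : PowerSeries ℤ) * S)) = 0 := by
      simp
    rw [hx, sub_zero]
    have := hT 0
    simp only [Set.mem_insert_iff, Set.mem_singleton_iff] at this ⊢
    tauto
  | succ m =>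
    rw [PowerSeries.coeff_succ_X_mul]
    have h1 := hT (m + 1)
    have h2 := hT m
    simp only [Set.mem_insert_iff, Set.mem_singleton_iff] at h1 h2 ⊢
    rcases h1 with h1 | h1 <;> rcases h2 with h2 | h2 <;> rw [h1, h2] <;> norm_num
end

section
/- Let p and q be distinct odd primes and let ρ, σ be the unique non-negative integers with 1 + pq = (ρ+1)p + (σ+1)q. For 0 ≤ m < pq, the coefficient of x^m in Φ_{pq}(x) equals 1 if m = αp + βq with 0 ≤ α ≤ ρ and 0 ≤ β ≤ σ; it equals -1 if m = αp + βq - pq with ρ+1 ≤ α ≤ q-1 and σ+1 ≤ β ≤ p-1; and it equals 0 otherwise. -/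
open Polynomial Finset

private lemma geom' (n k : ℕ) :
    (∑ i ∈ Finset.range n, (X:ℤ[X])^(i*k)) * (X^k - 1) = X^(n*k) - 1 := by
  have := geom_sum_mul (X^k : ℤ[X]) n
  simpa [← pow_mul, mul_comm] using this

private lemma divs (p q : ℕ) (hp : p.Prime) (hq : q.Prime) (hpq : p ≠ q) :
    (p*q).divisors = {1, p, q, p*q} := by
  rw [Nat.divisors_mul, hp.divisors, hq.divisors]
  ext d
  simp [Finset.mem_mul]
  aesop

private lemma cyclo_id (p q : ℕ) (hp : p.Prime) (hq : q.Prime) (hpq : p ≠ q) :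
    cyclotomic (p*q) ℤ * ((X^p - 1) * (X^q - 1)) = (X^(p*q) - 1) * (X - 1) := by
  have hp1 := hp.one_lt
  have hq1 := hq.one_lt
  have h1 : (X^(p*q) - 1 : ℤ[X])
      = cyclotomic 1 ℤ * cyclotomic p ℤ * cyclotomic q ℤ * cyclotomic (p*q) ℤ := by
    rw [← prod_cyclotomic_eq_X_pow_sub_one (by positivity) ℤ, divs p q hp hq hpq]
    have h2 : p*q ≠ 1 := by nlinarith
    have h3 : p ≠ p*q := by nlinarith
    have h4 : q ≠ p*q := by nlinarith
    rw [Finset.prod_insert (by simp; omega), Finset.prod_insert (by simp; omega),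
      Finset.prod_insert (by simp; omega), Finset.prod_singleton]
    ring
  have hpe : (X^p - 1 : ℤ[X]) = cyclotomic 1 ℤ * cyclotomic p ℤ := by
    rw [← prod_cyclotomic_eq_X_pow_sub_one hp.pos ℤ, hp.divisors,
      Finset.prod_insert (by simp; omega), Finset.prod_singleton]
  have hqe : (X^q - 1 : ℤ[X]) = cyclotomic 1 ℤ * cyclotomic q ℤ := by
    rw [← prod_cyclotomic_eq_X_pow_sub_one hq.pos ℤ, hq.divisors,
      Finset.prod_insert (by simp; omega), Finset.prod_singleton]
  rw [hpe, hqe, h1, cyclotomic_one]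
  ring

private lemma P_id (p q ρ σ : ℕ) (hp2 : 2 ≤ p) (hq2 : 2 ≤ q)
    (hρσ : 1 + p * q = (ρ + 1) * p + (σ + 1) * q) :
    ((∑ i ∈ range (ρ+1), (X:ℤ[X])^(i*p)) * (∑ j ∈ range (σ+1), X^(j*q))
      - ∑ i ∈ Ico (ρ+1) q, ∑ j ∈ Ico (σ+1) p, X^(i*p + j*q - p*q)) * ((X^p - 1) * (X^q - 1))
    = (X^(p*q) - 1) * (X - 1) := by
  have hρq : ρ + 1 ≤ q := by nlinarith
  have hσp : σ + 1 ≤ p := by nlinarith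
  have hXn : (X:ℤ[X])^(p*q) ≠ 0 := pow_ne_zero _ X_ne_zero
  apply mul_left_cancel₀ hXn
  have hA : (∑ i ∈ range (ρ+1), (X:ℤ[X])^(i*p)) * (X^p - 1) = X^((ρ+1)*p) - 1 := geom' _ _
  have hA' : (∑ j ∈ range (σ+1), (X:ℤ[X])^(j*q)) * (X^q - 1) = X^((σ+1)*q) - 1 := geom' _ _
  have hT1 : (∑ i ∈ Ico (ρ+1) q, (X:ℤ[X])^(i*p)) * (X^p - 1) = X^(q*p) - X^((ρ+1)*p) := by
    rw [Finset.sum_Ico_eq_sub _ hρq, sub_mul, geom', geom']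
    ring
  have hT2 : (∑ j ∈ Ico (σ+1) p, (X:ℤ[X])^(j*q)) * (X^q - 1) = X^(p*q) - X^((σ+1)*q) := by
    rw [Finset.sum_Ico_eq_sub _ hσp, sub_mul, geom', geom']
    ring
  have hB : (X:ℤ[X])^(p*q) * (∑ i ∈ Ico (ρ+1) q, ∑ j ∈ Ico (σ+1) p, X^(i*p + j*q - p*q))
      = (∑ i ∈ Ico (ρ+1) q, (X:ℤ[X])^(i*p)) * (∑ j ∈ Ico (σ+1) p, X^(j*q)) := by
    rw [Finset.sum_mul_sum, Finset.mul_sum]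
    refine Finset.sum_congr rfl fun i hi => ?_
    rw [Finset.mul_sum]
    refine Finset.sum_congr rfl fun j hj => ?_
    simp only [mem_Ico] at hi hj
    rw [← pow_add, ← pow_add]
    congr 1
    have h1 : (ρ+1)*p ≤ i*p := Nat.mul_le_mul_right _ hi.1
    have h2 : (σ+1)*q ≤ j*q := Nat.mul_le_mul_right _ hj.1
    omega
  have hab : (X:ℤ[X])^((ρ+1)*p) * X^((σ+1)*q) = X * X^(p*q) := by
    rw [← pow_add, mul_comm (X:ℤ[X]) (X^(p*q)), ← pow_succ]
    congr 1
    omega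
  have hqp : (X:ℤ[X])^(q*p) = X^(p*q) := by rw [mul_comm]
  have e1 : (X:ℤ[X])^(p*q) * (((∑ i ∈ range (ρ+1), (X:ℤ[X])^(i*p)) * (∑ j ∈ range (σ+1), X^(j*q))
      - ∑ i ∈ Ico (ρ+1) q, ∑ j ∈ Ico (σ+1) p, X^(i*p + j*q - p*q)) * ((X^p - 1) * (X^q - 1)))
      = ((∑ i ∈ range (ρ+1), (X:ℤ[X])^(i*p)) * (X^p - 1))
          * ((∑ j ∈ range (σ+1), (X:ℤ[X])^(j*q)) * (X^q - 1)) * X^(p*q)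
        - ((X:ℤ[X])^(p*q) * (∑ i ∈ Ico (ρ+1) q, ∑ j ∈ Ico (σ+1) p, X^(i*p + j*q - p*q)))
          * ((X^p - 1) * (X^q - 1)) := by
    ring
  rw [e1, hA, hA', hB]
  have e2 : ((∑ i ∈ Ico (ρ+1) q, (X:ℤ[X])^(i*p)) * (∑ j ∈ Ico (σ+1) p, X^(j*q)))
        * ((X^p - 1) * (X^q - 1))
      = ((∑ i ∈ Ico (ρ+1) q, (X:ℤ[X])^(i*p)) * (X^p - 1))
        * ((∑ j ∈ Ico (σ+1) p, (X:ℤ[X])^(j*q)) * (X^q - 1)) := by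
    ring
  rw [e2, hT1, hT2, hqp]
  linear_combination ((X:ℤ[X])^(p*q) - 1) * hab

private lemma coeff_double (s t : Finset ℕ) (f : ℕ → ℕ → ℕ) (m : ℕ) :
    (∑ i ∈ s, ∑ j ∈ t, (X:ℤ[X])^(f i j)).coeff m
      = ∑ i ∈ s, ∑ j ∈ t, (if m = f i j then (1:ℤ) else 0) := by
  simp [Polynomial.finset_sum_coeff, Polynomial.coeff_X_pow]

private lemma sum_ite_one {s t : Finset ℕ} {f : ℕ → ℕ → ℕ} {m a b : ℕ}
    (ha : a ∈ s) (hb : b ∈ t) (hab : f a b = m)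
    (uniq : ∀ i ∈ s, ∀ j ∈ t, f i j = m → i = a ∧ j = b) :
    ∑ i ∈ s, ∑ j ∈ t, (if m = f i j then (1:ℤ) else 0) = 1 := by
  rw [Finset.sum_eq_single a]
  · rw [Finset.sum_eq_single b]
    · rw [if_pos hab.symm]
    · intro j hj hne; exact if_neg (fun h => hne ((uniq a ha j hj h.symm).2))
    · intro h; exact absurd hb h
  · intro i hi hne
    exact Finset.sum_eq_zero fun j hj => if_neg (fun h => hne ((uniq i hi j hj h.symm).1))
  · intro h; exact absurd ha h

private lemma sum_ite_zero' {s t : Finset ℕ} {f : ℕ → ℕ → ℕ} {m : ℕ}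
    (h : ∀ i ∈ s, ∀ j ∈ t, f i j ≠ m) :
    ∑ i ∈ s, ∑ j ∈ t, (if m = f i j then (1:ℤ) else 0) = 0 :=
  Finset.sum_eq_zero fun i hi => Finset.sum_eq_zero fun j hj =>
    if_neg (fun h' => h i hi j hj h'.symm)

private lemma eq_mod (p q : ℕ) (hcop : Nat.gcd q p = 1) {i i' : ℕ} (hi : i < q) (hi' : i' < q)
    (h : i*p ≡ i'*p [MOD q]) : i = i' := by
  have h2 := h.cancel_right_of_coprime hcop
  simpa [Nat.ModEq, Nat.mod_eq_of_lt hi, Nat.mod_eq_of_lt hi'] using h2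

/-- cancel p mod q from a nat equation `i*p + j*q = i'*p + j'*q + k*q` -/
private lemma eq_mod' (p q : ℕ) (hcop : Nat.gcd q p = 1) {i i' j j' k : ℕ}
    (hi : i < q) (hi' : i' < q) (h : i*p + j*q = i'*p + j'*q + k*q) : i = i' := by
  apply eq_mod p q hcop hi hi'
  have h1 : i*p + j*q = i'*p + (j' + k)*q := by rw [h]; ring
  have h2 := congrArg (· % q) h1
  simpa [Nat.add_mul_mod_self_right, Nat.ModEq] using h2

theorem stmt_1 (p q : ℕ) (hp : p.Prime) (hq : q.Prime) (hpq : p ≠ q)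
    (hpo : Odd p) (hqo : Odd q)
    (ρ σ : ℕ) (hρσ : 1 + p * q = (ρ + 1) * p + (σ + 1) * q)
    (m : ℕ) (hm : m < p * q) :
    ((∃ α β : ℕ, α ≤ ρ ∧ β ≤ σ ∧ m = α * p + β * q) →
        (Polynomial.cyclotomic (p * q) ℤ).coeff m = 1) ∧
    ((∃ α β : ℕ, ρ + 1 ≤ α ∧ α ≤ q - 1 ∧ σ + 1 ≤ β ∧ β ≤ p - 1 ∧
        m + p * q = α * p + β * q) →
        (Polynomial.cyclotomic (p * q) ℤ).coeff m = -1) ∧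
    ((¬ (∃ α β : ℕ, α ≤ ρ ∧ β ≤ σ ∧ m = α * p + β * q)) →
     (¬ (∃ α β : ℕ, ρ + 1 ≤ α ∧ α ≤ q - 1 ∧ σ + 1 ≤ β ∧ β ≤ p - 1 ∧
        m + p * q = α * p + β * q)) →
        (Polynomial.cyclotomic (p * q) ℤ).coeff m = 0) := by
  have hp2 := hp.two_le
  have hq2 := hq.two_le
  have hρq : ρ + 1 ≤ q := by nlinarith
  have hσp : σ + 1 ≤ p := by nlinarith
  have hcop : Nat.gcd q p = 1 := (Nat.coprime_primes hq hp).mpr hpq.symm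
  -- Φ = P
  have hfac : ((X^p - 1) * (X^q - 1) : ℤ[X]) ≠ 0 := by
    apply mul_ne_zero
    · have := X_pow_sub_C_ne_zero (R := ℤ) hp.pos 1
      simpa using this
    · have := X_pow_sub_C_ne_zero (R := ℤ) hq.pos 1
      simpa using this
  have hPhi : cyclotomic (p*q) ℤ
      = (∑ i ∈ range (ρ+1), (X:ℤ[X])^(i*p)) * (∑ j ∈ range (σ+1), X^(j*q))
        - ∑ i ∈ Ico (ρ+1) q, ∑ j ∈ Ico (σ+1) p, X^(i*p + j*q - p*q) := by
    apply mul_right_cancel₀ hfac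
    rw [cyclo_id p q hp hq hpq, P_id p q ρ σ hp2 hq2 hρσ]
  -- rewrite first product as a double sum
  have hSS : (∑ i ∈ range (ρ+1), (X:ℤ[X])^(i*p)) * (∑ j ∈ range (σ+1), X^(j*q))
      = ∑ i ∈ range (ρ+1), ∑ j ∈ range (σ+1), (X:ℤ[X])^(i*p + j*q) := by
    rw [Finset.sum_mul_sum]
    exact Finset.sum_congr rfl fun i _ => Finset.sum_congr rfl fun j _ => (pow_add X _ _).symm
  rw [hSS] at hPhi
  have hcoeff : (cyclotomic (p*q) ℤ).coeff m
      = (∑ i ∈ range (ρ+1), ∑ j ∈ range (σ+1), (if m = i*p + j*q then (1:ℤ) else 0))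
        - (∑ i ∈ Ico (ρ+1) q, ∑ j ∈ Ico (σ+1) p, (if m = i*p + j*q - p*q then (1:ℤ) else 0)) := by
    rw [hPhi, coeff_sub, coeff_double, coeff_double]
  -- helper: B-term exponents sit above pq
  have hBge : ∀ i ∈ Ico (ρ+1) q, ∀ j ∈ Ico (σ+1) p, p*q + 1 ≤ i*p + j*q := by
    intro i hi j hj
    simp only [mem_Ico] at hi hj
    have h1 : (ρ+1)*p ≤ i*p := Nat.mul_le_mul_right _ hi.1
    have h2 : (σ+1)*q ≤ j*q := Nat.mul_le_mul_right _ hj.1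
    omega
  refine ⟨?_, ?_, ?_⟩
  · rintro ⟨α, β, hα, hβ, hmab⟩
    rw [hcoeff]
    rw [sum_ite_one (a := α) (b := β) (by simp; omega) (by simp; omega) hmab.symm ?uniq,
      sum_ite_zero' ?zero]
    · ring
    case uniq =>
      intro i hi j hj hij
      simp only [mem_range] at hi hj
      have hiq : i < q := by omega
      have hαq : α < q := by omega
      have hieq : i = α := eq_mod' p q hcop (j := j) (j' := β) (k := 0) hiq hαq
        (by rw [hij, hmab]; ring)
      subst hieq
      have : j * q = β * q := by omega
      exact ⟨rfl, Nat.eq_of_mul_eq_mul_right hq.pos this⟩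
    case zero =>
      intro i hi j hj hne
      have hge := hBge i hi j hj
      simp only [mem_Ico] at hi hj
      -- hne : i*p + j*q - p*q = m, so i*p + j*q = m + p*q
      have heq : i*p + j*q = m + p*q := by omega
      have hiq : i < q := hi.2
      have hαq : α < q := by omega
      have hieq : i = α := eq_mod' p q hcop (j := j) (j' := β) (k := p) hiq hαq
        (by rw [heq, hmab])
      omega
  · rintro ⟨α, β, hα1, hα2, hβ1, hβ2, hmab⟩
    have hαq : α < q := by omega
    have hβp : β < p := by omega
    rw [hcoeff]
    rw [sum_ite_zero' ?zero, sum_ite_one (a := α) (b := β)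
      (by simp [mem_Ico]; omega) (by simp [mem_Ico]; omega)
      (by omega) ?uniq]
    · ring
    case uniq =>
      intro i hi j hj hij
      have hge := hBge i hi j hj
      simp only [mem_Ico] at hi hj
      have heq : i*p + j*q = m + p*q := by omega
      have hieq : i = α := eq_mod' p q hcop (j := j) (j' := β) (k := 0) hi.2 hαq
        (by rw [heq, hmab]; ring)
      subst hieq
      have : j * q = β * q := by omega
      exact ⟨rfl, Nat.eq_of_mul_eq_mul_right hq.pos this⟩
    case zero =>
      intro i hi j hj hne
      simp only [mem_range] at hi hj
      have hiq : i < q := by omega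
      have hieq : α = i := eq_mod' p q hcop (j := β) (j' := j) (k := p) hαq hiq
        (by rw [← hmab, hne])
      omega
  · intro h1 h2
    rw [hcoeff]
    rw [sum_ite_zero' ?z1, sum_ite_zero' ?z2]
    · ring
    case z1 =>
      intro i hi j hj hne
      simp only [mem_range] at hi hj
      exact h1 ⟨i, j, by omega, by omega, hne.symm⟩
    case z2 =>
      intro i hi j hj hne
      have hge := hBge i hi j hj
      simp only [mem_Ico] at hi hj
      exact h2 ⟨i, j, hi.1, by omega, hj.1, by omega, by omega⟩
end

section
/- Let u > 1 and v > 1 be coprime natural numbers. Then τ_{u,v}(x) = (x-1)(x^{uv}-1)/((x^u-1)(x^v-1)) is a polynomial with integer coefficients. -/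
open Polynomial Finset

theorem stmt_2 (u v : ℕ) (hu : 1 < u) (hv : 1 < v) (huv : Nat.Coprime u v) :
    ((X ^ u - 1) * (X ^ v - 1)) ∣ ((X - 1) * (X ^ (u * v) - 1) : Polynomial ℤ) := by
  have hu0 : 0 < u := by omega
  have hv0 : 0 < v := by omega
  have hinter : u.divisors ∩ v.divisors = {1} := by
    ext d
    simp only [mem_inter, Nat.mem_divisors, Finset.mem_singleton]
    constructor
    · rintro ⟨⟨hdu, -⟩, hdv, -⟩
      exact Nat.eq_one_of_dvd_coprimes huv hdu hdv
    · rintro rfl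
      exact ⟨⟨one_dvd _, hu0.ne'⟩, one_dvd _, hv0.ne'⟩
  have hsub : u.divisors ∪ v.divisors ⊆ (u * v).divisors := by
    intro d hd
    rcases Finset.mem_union.1 hd with h | h <;>
      simp only [Nat.mem_divisors] at h ⊢ <;>
      exact ⟨h.1.trans (by simp), by positivity⟩
  rw [← prod_cyclotomic_eq_X_pow_sub_one hu0 ℤ, ← prod_cyclotomic_eq_X_pow_sub_one hv0 ℤ,
    ← prod_cyclotomic_eq_X_pow_sub_one (by positivity : 0 < u * v) ℤ,
    ← Finset.prod_union_inter, hinter]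
  simp only [Finset.prod_singleton, cyclotomic_one]
  rw [mul_comm]
  exact mul_dvd_mul_left _ (Finset.prod_dvd_prod_of_subset _ _ _ hsub)
end

section
/- Let u > 1 and v > 1 be coprime natural numbers. Then the polynomial τ_{u,v}(x) = (x-1)(x^{uv}-1)/((x^u-1)(x^v-1)) has all coefficients in {-1, 0, 1}. -/
open Polynomial

theorem stmt_3 (u v : ℕ) (hu : 1 < u) (hv : 1 < v) (huv : Nat.Coprime u v)
    (τ : Polynomial ℤ)
    (hτ : τ * ((X ^ u - 1) * (X ^ v - 1)) = (X - 1) * (X ^ (u * v) - 1)) (k : ℕ) :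
    τ.coeff k ∈ ({-1, 0, 1} : Set ℤ) := by
  classical
  set G : Polynomial ℤ := ∑ b ∈ Finset.range u, X ^ (v * b) with hG
  set E : Polynomial ℤ := (X - 1) * G with hEdef
  -- Step 1: cancel (X^v - 1) to obtain τ * (X^u - 1) = E
  have hXv : (X ^ v - 1 : Polynomial ℤ) ≠ 0 := by
    intro h
    have h2 := congrArg (fun p => Polynomial.coeff p v) h
    simp [Polynomial.coeff_one, show v ≠ 0 by omega] at h2
  have hgeom : (X ^ (u * v) - 1 : Polynomial ℤ) = G * (X ^ v - 1) := by
    calc (X ^ (u * v) - 1 : Polynomial ℤ) = (X ^ v) ^ u - 1 := by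
          rw [← pow_mul, mul_comm u v]
    _ = (∑ i ∈ Finset.range u, (X ^ v) ^ i) * (X ^ v - 1) := (geom_sum_mul _ u).symm
    _ = G * (X ^ v - 1) := by
          rw [hG]
          congr 1
          exact Finset.sum_congr rfl fun i _ => (pow_mul X v i).symm
  have hE : τ * (X ^ u - 1) = E := by
    apply mul_right_cancel₀ hXv
    rw [hEdef]
    calc τ * (X ^ u - 1) * (X ^ v - 1) = τ * ((X ^ u - 1) * (X ^ v - 1)) := by ring
    _ = (X - 1) * (X ^ (u * v) - 1) := hτ
    _ = (X - 1) * (G * (X ^ v - 1)) := by rw [hgeom]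
    _ = (X - 1) * G * (X ^ v - 1) := by ring
  -- Step 2: coefficient recursion
  have hrec : ∀ n : ℕ, τ.coeff n = τ.coeff (n + u) + E.coeff (n + u) := by
    intro n
    have := congrArg (fun p => Polynomial.coeff p (n + u)) hE
    simp only [mul_sub, mul_one, Polynomial.coeff_sub,
      Polynomial.coeff_mul_X_pow] at this
    linarith
  -- Step 3: telescoping
  have tel : ∀ m n : ℕ, τ.coeff n = τ.coeff (n + m * u)
      + ∑ j ∈ Finset.range m, E.coeff (n + (j + 1) * u) := by
    intro m
    induction m with
    | zero => intro n; simp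
    | succ m ih =>
      intro n
      rw [ih n, hrec (n + m * u), Finset.sum_range_succ]
      have e1 : n + m * u + u = n + (m + 1) * u := by ring
      rw [e1]
      ring
  set m : ℕ := τ.natDegree + 1 with hm
  have hz : τ.coeff (k + m * u) = 0 := by
    apply Polynomial.coeff_eq_zero_of_natDegree_lt
    have h1 : m ≤ m * u := Nat.le_mul_of_pos_right m (by omega)
    omega
  have hmain : τ.coeff k = ∑ j ∈ Finset.range m, E.coeff (k + (j + 1) * u) := by
    rw [tel m k, hz, zero_add]
  -- Step 4: coefficients of E and G
  have hGcoeff : ∀ x : ℕ, G.coeff x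
      = ∑ b ∈ Finset.range u, (if x = v * b then (1 : ℤ) else 0) := by
    intro x
    rw [hG, Polynomial.finset_sum_coeff]
    exact Finset.sum_congr rfl fun b _ => Polynomial.coeff_X_pow (v * b) x
  have hEc : ∀ t : ℕ, 1 ≤ t → E.coeff t = G.coeff (t - 1) - G.coeff t := by
    intro t ht
    obtain ⟨s, rfl⟩ : ∃ s, t = s + 1 := ⟨t - 1, by omega⟩
    rw [hEdef, sub_mul, one_mul, Polynomial.coeff_sub, Polynomial.coeff_X_mul]
    simp
  -- Step 5: each of the two sums of G-coefficients is 0 or 1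
  have hcop : IsCoprime (u : ℤ) (v : ℤ) := Nat.isCoprime_iff_coprime.mpr huv
  have key : ∀ t : ℕ → ℕ,
      (∀ i ∈ Finset.range m, ∀ j ∈ Finset.range m, ∀ b < u, ∀ c < u,
        t i = v * b → t j = v * c → i = j) →
      (∑ j ∈ Finset.range m, G.coeff (t j)) = 0
        ∨ (∑ j ∈ Finset.range m, G.coeff (t j)) = 1 := by
    intro t ht
    have hsum : ∑ j ∈ Finset.range m, G.coeff (t j)
        = ∑ p ∈ Finset.range m ×ˢ Finset.range u,
            (if t p.1 = v * p.2 then (1 : ℤ) else 0) := by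
      rw [Finset.sum_product]
      exact Finset.sum_congr rfl fun j _ => hGcoeff (t j)
    rw [hsum, Finset.sum_boole]
    have hcard : (Finset.filter (fun p : ℕ × ℕ => t p.1 = v * p.2)
        (Finset.range m ×ˢ Finset.range u)).card ≤ 1 := by
      apply Finset.card_le_one.mpr
      intro a ha b hb
      simp only [Finset.mem_filter, Finset.mem_product, Finset.mem_range] at ha hb
      obtain ⟨⟨ha1, ha2⟩, hae⟩ := ha
      obtain ⟨⟨hb1, hb2⟩, hbe⟩ := hb
      have hij : a.1 = b.1 :=
        ht a.1 (Finset.mem_range.mpr ha1) b.1 (Finset.mem_range.mpr hb1)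
          a.2 ha2 b.2 hb2 hae hbe
      have h2 : v * a.2 = v * b.2 := by rw [← hae, ← hbe, hij]
      have h3 : a.2 = b.2 := Nat.eq_of_mul_eq_mul_left (by omega) h2
      exact Prod.ext hij h3
    generalize hc : (Finset.filter (fun p : ℕ × ℕ => t p.1 = v * p.2)
        (Finset.range m ×ˢ Finset.range u)).card = c at hcard ⊢
    interval_cases c <;> simp
  -- injectivity argument, shared for both index functions
  have inj : ∀ w : ℤ, ∀ i j b c : ℕ, b < u → c < u →
      (w + (i + 1) * u = v * b) → (w + (j + 1) * u = v * c) → i = j := by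
    intro w i j b c hb hc hib hjc
    have hd : (u : ℤ) ∣ (v : ℤ) * ((b : ℤ) - c) := by
      refine ⟨(i : ℤ) - j, ?_⟩
      push_cast at hib hjc ⊢
      linarith
    have hdvd : (u : ℤ) ∣ (b : ℤ) - (c : ℤ) := hcop.dvd_of_dvd_mul_left hd
    have hbu : (b : ℤ) < u := by exact_mod_cast hb
    have hcu : (c : ℤ) < u := by exact_mod_cast hc
    have hb0 : (0 : ℤ) ≤ b := Int.natCast_nonneg b
    have hc0 : (0 : ℤ) ≤ c := Int.natCast_nonneg c
    have hbc : (b : ℤ) - c = 0 :=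
      Int.eq_zero_of_abs_lt_dvd hdvd (abs_lt.mpr ⟨by linarith, by linarith⟩)
    have hvv : (v : ℤ) * b = v * c := by
      have : (b : ℤ) = c := by linarith
      rw [this]
    have h5 : ((i : ℤ) - j) * u = 0 := by
      push_cast at hib hjc
      linarith [hib, hjc, hvv]
    have hu0 : (u : ℤ) ≠ 0 := by positivity
    rcases mul_eq_zero.mp h5 with h6 | h6
    · have : (i : ℤ) = j := by linarith
      exact_mod_cast this
    · exact absurd h6 hu0
  -- Step 6: put it together
  have hsplit : τ.coeff k
      = (∑ j ∈ Finset.range m, G.coeff (k + (j + 1) * u - 1))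
        - (∑ j ∈ Finset.range m, G.coeff (k + (j + 1) * u)) := by
    rw [hmain, ← Finset.sum_sub_distrib]
    refine Finset.sum_congr rfl fun j _ => ?_
    apply hEc
    have : 0 < (j + 1) * u := Nat.mul_pos (by omega) (by omega)
    omega
  have hS1 : (∑ j ∈ Finset.range m, G.coeff (k + (j + 1) * u - 1)) = 0
      ∨ (∑ j ∈ Finset.range m, G.coeff (k + (j + 1) * u - 1)) = 1 := by
    apply key
    intro i _ j _ b hb c hc hib hjc
    have h1 : 1 ≤ k + (i + 1) * u := by
      have : 0 < (i + 1) * u := Nat.mul_pos (by omega) (by omega)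
      omega
    have h2 : 1 ≤ k + (j + 1) * u := by
      have : 0 < (j + 1) * u := Nat.mul_pos (by omega) (by omega)
      omega
    refine inj ((k : ℤ) - 1) i j b c hb hc ?_ ?_
    · have : ((k + (i + 1) * u - 1 : ℕ) : ℤ) = (v : ℤ) * b := by exact congrArg (fun x : ℕ => (x : ℤ)) hib
      push_cast [Nat.cast_sub h1] at this ⊢
      linarith
    · have : ((k + (j + 1) * u - 1 : ℕ) : ℤ) = (v : ℤ) * c := by exact congrArg (fun x : ℕ => (x : ℤ)) hjc
      push_cast [Nat.cast_sub h2] at this ⊢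
      linarith
  have hS2 : (∑ j ∈ Finset.range m, G.coeff (k + (j + 1) * u)) = 0
      ∨ (∑ j ∈ Finset.range m, G.coeff (k + (j + 1) * u)) = 1 := by
    apply key
    intro i _ j _ b hb c hc hib hjc
    refine inj (k : ℤ) i j b c hb hc ?_ ?_
    · exact_mod_cast congrArg (fun x : ℕ => (x : ℤ)) hib
    · exact_mod_cast congrArg (fun x : ℕ => (x : ℤ)) hjc
  simp only [Set.mem_insert_iff, Set.mem_singleton_iff]
  rcases hS1 with h1 | h1 <;> rcases hS2 with h2 | h2 <;>
    rw [hsplit, h1, h2] <;> norm_num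
end

section
/- Let 1 < u < v be coprime integers. Then the set of coefficients of the polynomial h(x) = (x-1)·τ_{u,v}(x) is {-2,-1,1,2} if u ≤ 3 and {-2,-1,0,1,2} if u > 3. -/
open Polynomial

section Stmt5Aux

variable (u v : ℕ)

def SG (n : ℕ) : Prop := ∃ a b : ℕ, n = a * u + b * v

open Classical in
noncomputable def chi (n : ℕ) : ℤ := if SG u v n then 1 else 0

variable {u v}

lemma chi_of_mem {n : ℕ} (h : SG u v n) : chi u v n = 1 := if_pos h
lemma chi_of_not_mem {n : ℕ} (h : ¬ SG u v n) : chi u v n = 0 := if_neg h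
lemma chi_zero_or_one (n : ℕ) : chi u v n = 0 ∨ chi u v n = 1 := by
  unfold chi; split <;> simp

lemma SG_zero : SG u v 0 := ⟨0, 0, by simp⟩

lemma SG_add_u {n : ℕ} (h : SG u v n) : SG u v (n + u) := by
  obtain ⟨a, b, rfl⟩ := h; exact ⟨a+1, b, by ring⟩

lemma SG_of_dvd {n : ℕ} (h : u ∣ n) : SG u v n := by
  obtain ⟨a, rfl⟩ := h; exact ⟨a, 0, by ring⟩

lemma SG_small (hu : 1 < u) (h' : u < v) {n : ℕ} (h0 : 0 < n) (hn : n < u) : ¬ SG u v n := by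
  rintro ⟨a, b, rfl⟩
  rcases Nat.eq_zero_or_pos a with rfl | ha
  · rcases Nat.eq_zero_or_pos b with rfl | hb
    · simp at h0
    · have : v ≤ b * v := Nat.le_mul_of_pos_left v hb
      omega
  · have : u ≤ a * u := Nat.le_mul_of_pos_left u ha
    omega

lemma SG_norm (hu : 0 < u) {n : ℕ} (h : SG u v n) : ∃ a b, b < u ∧ n = a * u + b * v := by
  obtain ⟨a, b, rfl⟩ := h
  refine ⟨a + b / u * v, b % u, Nat.mod_lt _ hu, ?_⟩
  conv_lhs => rw [← Nat.div_add_mod b u]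
  ring

lemma SG_iff (hu : 0 < u) (n : ℕ) :
    SG u v n ↔ ∃ b, b < u ∧ b * v ≤ n ∧ n ≡ b * v [MOD u] := by
  constructor
  · intro h
    obtain ⟨a, b, hb, rfl⟩ := SG_norm hu h
    refine ⟨b, hb, Nat.le_add_left _ _, ?_⟩
    show (a * u + b * v) % u = (b * v) % u
    rw [add_comm, Nat.add_mul_mod_self_right]
  · rintro ⟨b, hb, hle, hmod⟩
    obtain ⟨a, ha⟩ := (Nat.modEq_iff_dvd' hle).mp hmod.symm
    have h2 : n = u * a + b * v := by rw [← ha, Nat.sub_add_cancel hle]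
    exact ⟨a, b, by rw [h2, mul_comm]⟩

lemma SG_iff_closure (n : ℕ) : SG u v n ↔ n ∈ AddSubmonoid.closure ({u, v} : Set ℕ) := by
  rw [AddSubmonoid.mem_closure_pair]
  simp only [smul_eq_mul, SG]
  exact ⟨fun ⟨a, b, h⟩ => ⟨a, b, h.symm⟩, fun ⟨a, b, h⟩ => ⟨a, b, h.symm⟩⟩

lemma not_SG_F (hu : 1 < u) (hv : 1 < v) (cop : Nat.Coprime u v) :
    ¬ SG u v (u * v - u - v) := by
  rw [SG_iff_closure]
  exact (frobeniusNumber_pair cop hu hv).1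

lemma SG_of_F_lt (hu : 1 < u) (hv : 1 < v) (cop : Nat.Coprime u v) {n : ℕ}
    (hn : u * v - u - v < n) : SG u v n := by
  by_contra h
  rw [SG_iff_closure] at h
  exact absurd ((frobeniusNumber_pair cop hu hv).2 h) (not_le.mpr hn)

lemma SG_F_sub_one (hu : 1 < u) (hv : 1 < v) (hvu : u < v) (cop : Nat.Coprime u v) :
    SG u v (u * v - u - v - 1) := by
  haveI : NeZero v := ⟨by omega⟩
  set p : ℕ := (((ZMod.unitOfCoprime u cop)⁻¹ : (ZMod v)ˣ) : ZMod v).val with hp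
  have hpv : p < v := ZMod.val_lt _
  have hmod : p * u ≡ 1 [MOD v] := by
    rw [← ZMod.natCast_eq_natCast_iff]
    push_cast
    rw [hp, ZMod.natCast_val, ZMod.cast_id]
    have : ((u : ZMod v)) = ((ZMod.unitOfCoprime u cop : (ZMod v)ˣ) : ZMod v) :=
      (ZMod.coe_unitOfCoprime u cop).symm
    rw [this, ← Units.val_mul, inv_mul_cancel, Units.val_one]
  have hone : 1 ≤ p * u := by
    rcases Nat.eq_zero_or_pos (p * u) with h0 | h1
    · exfalso
      have : (0 : ℕ) ≡ 1 [MOD v] := h0 ▸ hmod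
      have := this.symm
      rw [Nat.modEq_zero_iff_dvd] at this
      have := Nat.le_of_dvd one_pos this
      omega
    · exact h1
  obtain ⟨q, hq⟩ := (Nat.modEq_iff_dvd' hone).mp hmod.symm
  have hpu : p * u = v * q + 1 := by rw [← hq, Nat.sub_add_cancel hone]
  have hq1 : 1 ≤ q := by
    rcases Nat.eq_zero_or_pos q with rfl | h
    · exfalso
      have : p * u = 1 := by omega
      have := Nat.eq_one_of_mul_eq_one_left this
      omega
    · exact h
  refine ⟨v - 1 - p, q - 1, ?_⟩
  have hUV : u + v + 1 ≤ u * v := by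
    have h2v : 2 * v ≤ u * v := Nat.mul_le_mul_right v hu
    have : u + v + 1 ≤ 2 * v := by omega
    omega
  have hpu' : (p : ℤ) * u = v * q + 1 := by exact_mod_cast hpu
  zify [hq1, show p ≤ v - 1 by omega, show (1:ℕ) ≤ v by omega,
    show u ≤ u * v by omega, show v ≤ u * v - u by omega,
    show 1 ≤ u * v - u - v by omega]
  linear_combination hpu'

lemma factA (hu : 1 < u) (hvu : u < v) (cop : Nat.Coprime u v) (n : ℕ) :
    (SG u v n ∧ (n < u ∨ ¬ SG u v (n - u))) ↔ ∃ b, b < u ∧ n = b * v := by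
  constructor
  · rintro ⟨hS, hcond⟩
    obtain ⟨a, b, hb, rfl⟩ := SG_norm (by omega) hS
    rcases Nat.eq_zero_or_pos a with rfl | ha
    · exact ⟨b, hb, by simp⟩
    · exfalso
      have hun : u ≤ a * u + b * v := le_trans (Nat.le_mul_of_pos_left u ha) (Nat.le_add_right _ _)
      rcases hcond with h | h
      · omega
      · apply h
        obtain ⟨a', rfl⟩ : ∃ a', a = a' + 1 := ⟨a - 1, by omega⟩
        refine ⟨a', b, ?_⟩
        rw [show (a' + 1) * u + b * v = a' * u + b * v + u by ring, Nat.add_sub_cancel]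
  · rintro ⟨b, hb, rfl⟩
    refine ⟨⟨0, b, by simp⟩, ?_⟩
    by_cases hlt : b * v < u
    · exact Or.inl hlt
    · right
      rintro ⟨a', b', hab⟩
      have hle : u ≤ b * v := not_lt.mp hlt
      have key : b * v = a' * u + u + b' * v := by
        have h2 := Nat.sub_add_cancel hle
        rw [hab] at h2
        rw [← h2]; ring
      have hb' : b' < b := by
        by_contra hge
        have h3 : b * v ≤ b' * v := Nat.mul_le_mul_right v (not_lt.mp hge)
        have h4 : 0 ≤ a' * u := Nat.zero_le _
        omega
      have hdvd : u ∣ (b - b') * v := by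
        refine ⟨a' + 1, ?_⟩
        rw [Nat.sub_mul, key, Nat.add_sub_cancel]
        ring
      have hu2 : u ∣ b - b' := cop.dvd_of_dvd_mul_right hdvd
      have : u ≤ b - b' := Nat.le_of_dvd (by omega) hu2
      omega

noncomputable def gps (u v : ℕ) : PowerSeries ℤ := PowerSeries.mk (chi u v)

lemma geo (hv : 0 < v) :
    ((1 : PowerSeries ℤ) - PowerSeries.X ^ v) *
      (∑ b ∈ Finset.range u, PowerSeries.X ^ (b * v)) =
      1 - PowerSeries.X ^ (u * v) := by
  rw [Finset.mul_sum]
  have h : ∀ b : ℕ, ((1 : PowerSeries ℤ) - PowerSeries.X ^ v) * PowerSeries.X ^ (b * v)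
      = PowerSeries.X ^ (b * v) - PowerSeries.X ^ ((b + 1) * v) := by
    intro b
    rw [sub_mul, one_mul, ← pow_add, show v + b * v = (b + 1) * v by ring]
  simp_rw [h]
  rw [Finset.sum_range_sub' (fun b => (PowerSeries.X : PowerSeries ℤ) ^ (b * v)) u]
  simp

lemma sum_coeff (hv : 0 < v) (n : ℕ) :
    (PowerSeries.coeff (R := ℤ) n) (∑ b ∈ Finset.range u, PowerSeries.X ^ (b * v)) =
      if ∃ b, b < u ∧ n = b * v then 1 else 0 := by
  rw [map_sum]
  simp_rw [PowerSeries.coeff_X_pow]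
  by_cases h : ∃ b, b < u ∧ n = b * v
  · obtain ⟨b₀, hb₀, rfl⟩ := h
    rw [if_pos ⟨b₀, hb₀, rfl⟩]
    rw [Finset.sum_congr rfl (g := fun b => if b = b₀ then (1:ℤ) else 0)
      (fun b _ => by
        congr 1
        simp only [eq_iff_iff]
        constructor
        · intro hh; exact (Nat.eq_of_mul_eq_mul_right hv hh.symm)
        · rintro rfl; rfl)]
    rw [Finset.sum_ite_eq' (Finset.range u) b₀ (fun _ => (1:ℤ))]
    rw [if_pos (Finset.mem_range.mpr hb₀)]
  · rw [if_neg h]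
    apply Finset.sum_eq_zero
    intro b hb
    rw [if_neg fun he => h ⟨b, Finset.mem_range.mp hb, he⟩]

lemma L2 (hu : 1 < u) (hvu : u < v) (cop : Nat.Coprime u v) :
    ((1 : PowerSeries ℤ) - PowerSeries.X ^ u) * gps u v =
      ∑ b ∈ Finset.range u, PowerSeries.X ^ (b * v) := by
  ext n
  rw [sum_coeff (show 0 < v by omega), sub_mul, one_mul, map_sub,
    PowerSeries.coeff_X_pow_mul']
  simp only [gps, PowerSeries.coeff_mk]
  by_cases hS : SG u v n
  · by_cases hun : u ≤ n
    · by_cases hS' : SG u v (n - u)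
      · rw [if_pos hun, chi_of_mem hS, chi_of_mem hS', if_neg]
        · norm_num
        · intro hex
          rcases ((factA hu hvu cop n).mpr hex).2 with h | h
          · omega
          · exact h hS'
      · rw [if_pos hun, chi_of_mem hS, chi_of_not_mem hS',
          if_pos ((factA hu hvu cop n).mp ⟨hS, Or.inr hS'⟩)]
        norm_num
    · rw [if_neg hun, chi_of_mem hS,
        if_pos ((factA hu hvu cop n).mp ⟨hS, Or.inl (by omega)⟩)]
      norm_num
  · have hnu : u ≤ n → ¬ SG u v (n - u) := fun h1 h2 => hS (by
      have h3 := SG_add_u h2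
      rwa [Nat.sub_add_cancel h1] at h3)
    have hnot : ¬ ∃ b, b < u ∧ n = b * v := fun ⟨b, _, he⟩ => hS ⟨0, b, by simp [he]⟩
    rw [chi_of_not_mem hS, if_neg hnot]
    by_cases hun : u ≤ n
    · rw [if_pos hun, chi_of_not_mem (hnu hun)]
      norm_num
    · rw [if_neg hun]
      norm_num


lemma main_eq (hu : 1 < u) (hvu : u < v) (cop : Nat.Coprime u v) (τ : Polynomial ℤ)
    (hτ : τ * ((X ^ u - 1) * (X ^ v - 1)) = (X - 1) * (X ^ (u * v) - 1)) :
    (((X - 1) * τ : Polynomial ℤ) : PowerSeries ℤ) = -((1 - PowerSeries.X) ^ 2 * gps u v) := by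
  have hv : 1 < v := lt_trans hu hvu
  have hM : ((1 : PowerSeries ℤ) - PowerSeries.X ^ u) * (1 - PowerSeries.X ^ v) ≠ 0 := by
    intro h
    have h0 := congrArg (PowerSeries.constantCoeff (R := ℤ)) h
    rw [map_mul, map_sub, map_sub, map_one, map_pow, map_pow, PowerSeries.constantCoeff_X,
      zero_pow (by omega : u ≠ 0), zero_pow (by omega : v ≠ 0), map_zero] at h0
    norm_num at h0
  have hcoe : (τ : PowerSeries ℤ) *
      ((PowerSeries.X ^ u - 1) * (PowerSeries.X ^ v - 1)) =
      (PowerSeries.X - 1) * (PowerSeries.X ^ (u * v) - 1) := by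
    have h := congrArg (fun p : Polynomial ℤ => (p : PowerSeries ℤ)) hτ
    simpa only [Polynomial.coe_mul, Polynomial.coe_sub, Polynomial.coe_pow, Polynomial.coe_X,
      Polynomial.coe_one] using h
  have hG : ((1 : PowerSeries ℤ) - PowerSeries.X ^ u) * (1 - PowerSeries.X ^ v) * gps u v =
      1 - PowerSeries.X ^ (u * v) := by
    rw [mul_comm ((1 : PowerSeries ℤ) - PowerSeries.X ^ u), mul_assoc,
      L2 hu hvu cop, geo (show 0 < v by omega)]
  apply mul_right_cancel₀ hM
  calc (((X - 1) * τ : Polynomial ℤ) : PowerSeries ℤ) *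
        (((1 : PowerSeries ℤ) - PowerSeries.X ^ u) * (1 - PowerSeries.X ^ v))
      = (PowerSeries.X - 1) * ((τ : PowerSeries ℤ) *
          ((PowerSeries.X ^ u - 1) * (PowerSeries.X ^ v - 1))) := by
        rw [Polynomial.coe_mul, Polynomial.coe_sub, Polynomial.coe_X, Polynomial.coe_one]
        ring
    _ = (PowerSeries.X - 1) * ((PowerSeries.X - 1) * (PowerSeries.X ^ (u * v) - 1)) := by
        rw [hcoe]
    _ = -((1 - PowerSeries.X) ^ 2) * (1 - PowerSeries.X ^ (u * v)) := by ring
    _ = -((1 - PowerSeries.X) ^ 2) *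
        (((1 : PowerSeries ℤ) - PowerSeries.X ^ u) * (1 - PowerSeries.X ^ v) * gps u v) := by
        rw [hG]
    _ = -((1 - PowerSeries.X) ^ 2 * gps u v) *
        (((1 : PowerSeries ℤ) - PowerSeries.X ^ u) * (1 - PowerSeries.X ^ v)) := by ring

lemma coeff_gen (hu : 1 < u) (hvu : u < v) (cop : Nat.Coprime u v) (τ : Polynomial ℤ)
    (hτ : τ * ((X ^ u - 1) * (X ^ v - 1)) = (X - 1) * (X ^ (u * v) - 1)) (n : ℕ) :
    ((X - 1) * τ).coeff n =
      ((if 1 ≤ n then chi u v (n - 1) else 0) + (if 1 ≤ n then chi u v (n - 1) else 0))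
      - chi u v n - (if 2 ≤ n then chi u v (n - 2) else 0) := by
  have hsplit : -((1 - PowerSeries.X : PowerSeries ℤ) ^ 2 * gps u v) =
      (PowerSeries.X ^ 1 * gps u v + PowerSeries.X ^ 1 * gps u v) - gps u v
        - PowerSeries.X ^ 2 * gps u v := by ring
  rw [← Polynomial.coeff_coe, main_eq hu hvu cop τ hτ, hsplit, map_sub, map_sub, map_add]
  simp only [PowerSeries.coeff_X_pow_mul', gps, PowerSeries.coeff_mk]

lemma coeff_zero (hu : 1 < u) (hvu : u < v) (cop : Nat.Coprime u v) (τ : Polynomial ℤ)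
    (hτ : τ * ((X ^ u - 1) * (X ^ v - 1)) = (X - 1) * (X ^ (u * v) - 1)) :
    ((X - 1) * τ).coeff 0 = -1 := by
  rw [coeff_gen hu hvu cop τ hτ 0]
  norm_num [chi_of_mem (SG_zero (u := u) (v := v))]

lemma coeff_one (hu : 1 < u) (hvu : u < v) (cop : Nat.Coprime u v) (τ : Polynomial ℤ)
    (hτ : τ * ((X ^ u - 1) * (X ^ v - 1)) = (X - 1) * (X ^ (u * v) - 1)) :
    ((X - 1) * τ).coeff 1 = 2 := by
  rw [coeff_gen hu hvu cop τ hτ 1]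
  norm_num [chi_of_mem (SG_zero (u := u) (v := v)),
    chi_of_not_mem (SG_small hu hvu one_pos hu)]

lemma coeff_two (hu : 1 < u) (hvu : u < v) (cop : Nat.Coprime u v) (τ : Polynomial ℤ)
    (hτ : τ * ((X ^ u - 1) * (X ^ v - 1)) = (X - 1) * (X ^ (u * v) - 1)) (m : ℕ) :
    ((X - 1) * τ).coeff (m + 2) =
      2 * chi u v (m + 1) - chi u v (m + 2) - chi u v m := by
  rw [coeff_gen hu hvu cop τ hτ (m + 2), if_pos (by omega : 1 ≤ m + 2),
    if_pos (by omega : 2 ≤ m + 2), show m + 2 - 1 = m + 1 by omega,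
    show m + 2 - 2 = m by omega]
  ring


lemma SG_of_chi_one {n : ℕ} (h : chi u v n = 1) : SG u v n := by
  by_contra hn
  rw [chi_of_not_mem hn] at h
  norm_num at h

lemma no_triple_two (hvu : 2 < v) {m : ℕ} (hm : m ≤ 2 * v - 2 - v) :
    ¬ (chi 2 v m = chi 2 v (m + 1) ∧ chi 2 v (m + 1) = chi 2 v (m + 2)) := by
  rintro ⟨h1, _⟩
  have hodd : ∀ o : ℕ, o % 2 = 1 → o < v → ¬ SG 2 v o := by
    intro o ho hov
    rw [SG_iff (by norm_num)]
    rintro ⟨b, hb, hle, hmod⟩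
    interval_cases b
    · simp only [Nat.ModEq, Nat.zero_mul] at hmod
      omega
    · omega
  rcases Nat.even_or_odd m with hpar | hpar
  · have he : (2 : ℕ) ∣ m := hpar.two_dvd
    have ho : (m + 1) % 2 = 1 := by omega
    rw [chi_of_mem (SG_of_dvd he),
      chi_of_not_mem (hodd (m + 1) ho (by omega))] at h1
    norm_num at h1
  · have ho : m % 2 = 1 := Nat.odd_iff.mp hpar
    have he : (2 : ℕ) ∣ (m + 1) := by omega
    rw [chi_of_not_mem (hodd m ho (by omega)),
      chi_of_mem (SG_of_dvd he)] at h1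
    norm_num at h1

lemma no_triple_three (hvu : 3 < v) (cop : Nat.Coprime 3 v) {m : ℕ}
    (hm : m ≤ 3 * v - 3 - v) :
    ¬ (chi 3 v m = chi 3 v (m + 1) ∧ chi 3 v (m + 1) = chi 3 v (m + 2)) := by
  rintro ⟨h1, h2⟩
  have hv3 : v % 3 ≠ 0 := by
    intro h
    have hd : (3 : ℕ) ∣ v := Nat.dvd_of_mod_eq_zero h
    have := Nat.eq_one_of_dvd_coprimes cop dvd_rfl hd
    omega
  rcases chi_zero_or_one (u := 3) (v := v) m with h0 | h0
  · have c1 : chi 3 v (m + 1) = 0 := by rw [← h1]; exact h0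
    have c2 : chi 3 v (m + 2) = 0 := by rw [← h2]; exact c1
    have ht : m % 3 = 0 ∨ (m + 1) % 3 = 0 ∨ (m + 2) % 3 = 0 := by omega
    rcases ht with ht | ht | ht
    · rw [chi_of_mem (SG_of_dvd (Nat.dvd_of_mod_eq_zero ht))] at h0; norm_num at h0
    · rw [chi_of_mem (SG_of_dvd (Nat.dvd_of_mod_eq_zero ht))] at c1; norm_num at c1
    · rw [chi_of_mem (SG_of_dvd (Nat.dvd_of_mod_eq_zero ht))] at c2; norm_num at c2
  · have c1 : chi 3 v (m + 1) = 1 := by rw [← h1]; exact h0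
    have c2 : chi 3 v (m + 2) = 1 := by rw [← h2]; exact c1
    have hns : ∀ q : ℕ, q ≤ 2 * v - 1 → q % 3 = (2 * v) % 3 → ¬ SG 3 v q := by
      intro q hq hqm
      rw [SG_iff (by norm_num)]
      rintro ⟨b, hb, hle, hmod⟩
      interval_cases b <;> simp only [Nat.ModEq, Nat.zero_mul, Nat.one_mul] at hmod <;> omega
    have hq : m % 3 = (2 * v) % 3 ∨ (m + 1) % 3 = (2 * v) % 3 ∨ (m + 2) % 3 = (2 * v) % 3 := by
      omega
    rcases hq with hq | hq | hq
    · exact hns m (by omega) hq (SG_of_chi_one h0)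
    · exact hns (m + 1) (by omega) hq (SG_of_chi_one c1)
    · exact hns (m + 2) (by omega) hq (SG_of_chi_one c2)

lemma natdeg (hu : 1 < u) (hvu : u < v) (cop : Nat.Coprime u v) (τ : Polynomial ℤ)
    (hτ : τ * ((X ^ u - 1) * (X ^ v - 1)) = (X - 1) * (X ^ (u * v) - 1)) :
    ((X - 1) * τ).natDegree = (u * v - u - v) + 2 := by
  have hv : 1 < v := hu.trans hvu
  apply le_antisymm
  · apply Polynomial.natDegree_le_iff_coeff_eq_zero.mpr
    intro N hN
    obtain ⟨m, rfl⟩ : ∃ m, N = m + 2 := ⟨N - 2, by omega⟩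
    rw [coeff_two hu hvu cop τ hτ m,
      chi_of_mem (SG_of_F_lt hu hv cop (show u * v - u - v < m by omega)),
      chi_of_mem (SG_of_F_lt hu hv cop (show u * v - u - v < m + 1 by omega)),
      chi_of_mem (SG_of_F_lt hu hv cop (show u * v - u - v < m + 2 by omega))]
    ring
  · apply Polynomial.le_natDegree_of_ne_zero
    rw [coeff_two hu hvu cop τ hτ (u * v - u - v),
      chi_of_not_mem (not_SG_F hu hv cop),
      chi_of_mem (SG_of_F_lt hu hv cop (by omega)),
      chi_of_mem (SG_of_F_lt hu hv cop (by omega))]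
    norm_num

end Stmt5Aux

theorem stmt_5 (u v : ℕ) (hu : 1 < u) (huv' : u < v) (huv : Nat.Coprime u v)
    (τ : Polynomial ℤ)
    (hτ : τ * ((X ^ u - 1) * (X ^ v - 1)) = (X - 1) * (X ^ (u * v) - 1)) :
    {c : ℤ | ∃ j ≤ ((X - 1) * τ).natDegree, ((X - 1) * τ).coeff j = c} =
      if u ≤ 3 then ({-2, -1, 1, 2} : Set ℤ) else ({-2, -1, 0, 1, 2} : Set ℤ) := by
  have hv : 1 < v := hu.trans huv'
  have h2v : 2 * v ≤ u * v := Nat.mul_le_mul_right v hu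
  have hUV : u + v + 1 ≤ u * v := by omega
  have hF1 : 1 ≤ u * v - u - v := by omega
  have hdeg := natdeg hu huv' huv τ hτ
  have cF : chi u v (u * v - u - v) = 0 := chi_of_not_mem (not_SG_F hu hv huv)
  have cF1 : chi u v (u * v - u - v + 1) = 1 :=
    chi_of_mem (SG_of_F_lt hu hv huv (by omega))
  have cF2 : chi u v (u * v - u - v + 2) = 1 :=
    chi_of_mem (SG_of_F_lt hu hv huv (by omega))
  have cFm : chi u v (u * v - u - v - 1) = 1 := chi_of_mem (SG_F_sub_one hu hv huv' huv)
  have w1 : ((X - 1) * τ).coeff 0 = -1 := coeff_zero hu huv' huv τ hτ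
  have w2 : ((X - 1) * τ).coeff 1 = 2 := coeff_one hu huv' huv τ hτ
  have w3 : ((X - 1) * τ).coeff (u * v - u - v + 2) = 1 := by
    rw [coeff_two hu huv' huv τ hτ (u * v - u - v), cF, cF1, cF2]
    norm_num
  have w4 : ((X - 1) * τ).coeff (u * v - u - v + 1) = -2 := by
    rw [show u * v - u - v + 1 = (u * v - u - v - 1) + 2 by omega,
      coeff_two hu huv' huv τ hτ (u * v - u - v - 1),
      show u * v - u - v - 1 + 1 = u * v - u - v by omega,
      show u * v - u - v - 1 + 2 = u * v - u - v + 1 by omega, cF, cF1, cFm]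
    norm_num
  by_cases h3 : u ≤ 3
  · rw [if_pos h3]
    ext c
    simp only [Set.mem_setOf_eq, Set.mem_insert_iff, Set.mem_singleton_iff]
    constructor
    · rintro ⟨j, hj, rfl⟩
      rw [hdeg] at hj
      have hnt : ∀ m : ℕ, m ≤ u * v - u - v →
          ¬ (chi u v m = chi u v (m + 1) ∧ chi u v (m + 1) = chi u v (m + 2)) := by
        intro m hm
        interval_cases u
        · exact no_triple_two huv' hm
        · exact no_triple_three huv' huv hm
      match j, hj with
      | 0, _ => rw [w1]; norm_num
      | 1, _ => rw [w2]; norm_num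
      | (m + 2), hj =>
        rw [coeff_two hu huv' huv τ hτ m]
        have hm : m ≤ u * v - u - v := by omega
        rcases chi_zero_or_one (u := u) (v := v) m with a | a <;>
          rcases chi_zero_or_one (u := u) (v := v) (m + 1) with b | b <;>
          rcases chi_zero_or_one (u := u) (v := v) (m + 2) with c' | c' <;>
          first
            | (rw [a, b, c']; omega)
            | exact absurd ⟨a.trans b.symm, b.trans c'.symm⟩ (hnt m hm)
    · rintro (rfl | rfl | rfl | rfl)
      · exact ⟨u * v - u - v + 1, by rw [hdeg]; omega, w4⟩
      · exact ⟨0, by omega, w1⟩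
      · exact ⟨u * v - u - v + 2, by rw [hdeg], w3⟩
      · exact ⟨1, by rw [hdeg]; omega, w2⟩
  · rw [if_neg h3]
    have w0 : ((X - 1) * τ).coeff 3 = 0 := by
      rw [show (3 : ℕ) = 1 + 2 by norm_num, coeff_two hu huv' huv τ hτ 1,
        chi_of_not_mem (SG_small hu huv' (by omega) (by omega)),
        chi_of_not_mem (SG_small hu huv' (by omega) (by omega)),
        chi_of_not_mem (SG_small hu huv' (by omega) (by omega))]
      norm_num
    ext c
    simp only [Set.mem_setOf_eq, Set.mem_insert_iff, Set.mem_singleton_iff]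
    constructor
    · rintro ⟨j, hj, rfl⟩
      match j, hj with
      | 0, _ => rw [w1]; norm_num
      | 1, _ => rw [w2]; norm_num
      | (m + 2), hj =>
        rw [coeff_two hu huv' huv τ hτ m]
        rcases chi_zero_or_one (u := u) (v := v) m with a | a <;>
          rcases chi_zero_or_one (u := u) (v := v) (m + 1) with b | b <;>
          rcases chi_zero_or_one (u := u) (v := v) (m + 2) with c' | c' <;>
          rw [a, b, c'] <;> norm_num
    · rintro (rfl | rfl | rfl | rfl | rfl)
      · exact ⟨u * v - u - v + 1, by rw [hdeg]; omega, w4⟩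
      · exact ⟨0, by omega, w1⟩
      · exact ⟨3, by rw [hdeg]; omega, w0⟩
      · exact ⟨u * v - u - v + 2, by rw [hdeg], w3⟩
      · exact ⟨1, by rw [hdeg]; omega, w2⟩
end

section
/- Let u and v be coprime positive integers. Then σ_{u,v}(x) = ((x^u-1)/(x-1))·((x^v-1)/(x-1)) divides x^{uv} - 1 in ℤ[x]. -/
open Polynomial Finset

theorem stmt_7 (u v : ℕ) (hu : 0 < u) (hv : 0 < v) (huv : Nat.Coprime u v) :
    ((∑ i ∈ range u, X ^ i) * (∑ i ∈ range v, X ^ i) : Polynomial ℤ) ∣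
      X ^ (u * v) - 1 := by
  have hdisj : Disjoint (u.divisors.erase 1) (v.divisors.erase 1) := by
    rw [Finset.disjoint_left]
    intro d hd hd'
    simp only [Finset.mem_erase, Nat.mem_divisors] at hd hd'
    exact hd.1 (Nat.eq_one_of_dvd_coprimes huv hd.2.1 hd'.2.1)
  rw [← Polynomial.prod_cyclotomic_eq_geom_sum hu,
      ← Polynomial.prod_cyclotomic_eq_geom_sum hv,
      ← Finset.prod_union hdisj,
      ← Polynomial.prod_cyclotomic_eq_X_pow_sub_one (mul_pos hu hv)]
  apply Finset.prod_dvd_prod_of_subset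
  intro d hd
  rcases Finset.mem_union.mp hd with h | h <;>
    simp only [Finset.mem_erase, Nat.mem_divisors] at h
  · exact Nat.mem_divisors.mpr ⟨h.2.1.trans (dvd_mul_right u v), (mul_pos hu hv).ne'⟩
  · exact Nat.mem_divisors.mpr ⟨h.2.1.trans (dvd_mul_left v u), (mul_pos hu hv).ne'⟩
end

section
/- Let p and q be distinct primes. Then all coefficients of the polynomial Φ_p(x)·Φ_{pq}(x)·Φ_{p^2}(x) lie in {0, 1}. -/
open Polynomial

theorem stmt_8 (p q : ℕ) (hp : p.Prime) (hq : q.Prime) (hpq : p ≠ q) (k : ℕ) :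
    (Polynomial.cyclotomic p ℤ * Polynomial.cyclotomic (p * q) ℤ *
      Polynomial.cyclotomic (p ^ 2) ℤ).coeff k ∈ ({0, 1} : Set ℤ) := by
  have : Fact p.Prime := ⟨hp⟩
  have hq' : ¬ q ∣ p := fun h => hpq ((Nat.prime_dvd_prime_iff_eq hq hp).mp h).symm
  have h1 : cyclotomic p ℤ * cyclotomic (p * q) ℤ = expand ℤ q (cyclotomic p ℤ) := by
    rw [cyclotomic_expand_eq_cyclotomic_mul hq hq', mul_comm]
  have h2 : cyclotomic (p ^ 2) ℤ = ∑ j ∈ Finset.range p, (X ^ p) ^ j := by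
    have := cyclotomic_prime_pow_eq_geom_sum (R := ℤ) (n := 1) hp
    simpa using this
  have h3 : expand ℤ q (cyclotomic p ℤ) = ∑ i ∈ Finset.range p, (X ^ q) ^ i := by
    rw [cyclotomic_prime ℤ p, map_sum]
    simp [expand_X, ← pow_mul, mul_comm]
  rw [h1, h3, h2, Finset.sum_mul_sum]
  simp only [← pow_mul, ← pow_add]
  rw [Polynomial.finset_sum_coeff]
  simp only [Polynomial.finset_sum_coeff, Polynomial.coeff_X_pow]
  have key : ∀ i j i' j', i < p → j < p → i' < p → j' < p →
      q * i + p * j = q * i' + p * j' → i = i' ∧ j = j' := by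
    intro i j i' j' hi hj hi' hj' h
    have hmod : q * i ≡ q * i' [MOD p] := by
      have : q * i + p * j ≡ q * i' + p * j' [MOD p] := by rw [h]
      simpa [Nat.ModEq, Nat.add_mul_mod_self_left] using this
    have hcop : Nat.Coprime p q := (Nat.coprime_primes hp hq).mpr hpq
    have hii : i ≡ i' [MOD p] := hmod.cancel_left_of_coprime hcop.gcd_eq_one
    have : i = i' := by
      have := hii.eq_of_lt_of_lt hi hi'
      omega
    subst this
    constructor
    · rfl
    · have hpp : p * j = p * j' := by omega
      exact Nat.eq_of_mul_eq_mul_left hp.pos hpp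
  rcases Nat.lt_or_ge k (0) with h | _
  · omega
  by_cases hx : ∃ i ∈ Finset.range p, ∃ j ∈ Finset.range p, q * i + p * j = k
  · obtain ⟨i, hi, j, hj, hij⟩ := hx
    right
    rw [Finset.sum_eq_single i]
    · rw [Finset.sum_eq_single j]
      · simp [hij]
      · intro b hb hbj
        simp only [Finset.mem_range] at *
        rw [if_neg]
        intro hcon
        exact hbj ((key i b i j hi hb hi hj (by omega)).2)
      · intro h; exact absurd hj h
    · intro a ha hai
      rw [Finset.sum_eq_zero]
      intro b hb
      simp only [Finset.mem_range] at *
      rw [if_neg]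
      intro hcon
      exact hai ((key a b i j ha hb hi hj (by omega)).1)
    · intro h; exact absurd hi h
  · left
    push_neg at hx
    rw [Finset.sum_eq_zero]
    intro a ha
    rw [Finset.sum_eq_zero]
    intro b hb
    exact if_neg fun hcon => hx a ha b hb hcon.symm
end

section
/- Let p and q be distinct primes. The set of coefficients of the polynomial Φ_p(x)·Φ_q(x)·Φ_{pq}(x)·Φ_{p^2}(x) equals {1, 2, ..., min(p,q)}. -/
open Polynomial Finset

private lemma lin9_1 (A r C p j : ℕ) (e1 : A + r = j) (e2 : r < p) (e3 : p ≤ C) :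
    j - A < C := by omega

private lemma lin9_2 (A B C p j : ℕ) (hC : 0 < C) (e : A + p = B) (h : j ≤ C + B - p - 1) :
    j - A < C := by omega

private lemma lin9_3 (A B C p j : ℕ) (hj : C + B - p - 1 < j) (h1 : A ≤ j)
    (h2 : j - A < C) (e : A + p ≤ B) : False := by omega

private lemma lin9_4 (A C D j : ℕ) (h1 : A ≤ j) (h2 : j - A < C) (e : D = A + C) :
    j < D := by omega

private lemma lin9_5 (A B C D : ℕ) (hC : 0 < C) (h3 : A < D) (e : D = B + C) : A - B < C := by omega

private lemma lin9_6 (d k q : ℕ) (ha : k ≤ d) (hb : d < k + q) : d - k < q := by omega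

private lemma lin9_7 (d a b : ℕ) (ha : a ≤ d) (hb : b ≤ d) (h : d - a = d - b) :
    a = b := by omega

private lemma geom_coeff9 (n m : ℕ) :
    (∑ i ∈ Finset.range n, (X : ℤ[X])^i).coeff m = if m < n then 1 else 0 := by
  rw [Polynomial.finset_sum_coeff]
  simp [Polynomial.coeff_X_pow, Finset.sum_ite_eq]

private lemma prod_eq9 (p q : ℕ) (hp : p.Prime) (hq : q.Prime) (hpq : p ≠ q) :
    Polynomial.cyclotomic p ℤ * Polynomial.cyclotomic q ℤ *
      Polynomial.cyclotomic (p * q) ℤ * Polynomial.cyclotomic (p ^ 2) ℤ =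
    (∑ i ∈ Finset.range (p*q), (X:ℤ[X])^i) * (∑ k ∈ Finset.range p, (X:ℤ[X])^(p*k)) := by
  haveI := Fact.mk hp
  haveI := Fact.mk hq
  have hA : cyclotomic p ℤ = ∑ i ∈ range p, (X:ℤ[X])^i := cyclotomic_prime ℤ p
  have hB : cyclotomic q ℤ = ∑ i ∈ range q, (X:ℤ[X])^i := cyclotomic_prime ℤ q
  have hexp : ∀ n : ℕ, (expand ℤ p) (∑ i ∈ range n, (X:ℤ[X])^i) = ∑ i ∈ range n, (X:ℤ[X])^(p*i) := by
    intro n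
    rw [map_sum]
    refine Finset.sum_congr rfl fun i _ => ?_
    rw [map_pow, expand_X, ← pow_mul]
  have hnd : ¬ p ∣ q := fun h => hpq ((Nat.prime_dvd_prime_iff_eq hp hq).mp h)
  have h1 : cyclotomic (p*q) ℤ * cyclotomic q ℤ = ∑ i ∈ range q, (X:ℤ[X])^(p*i) := by
    rw [← hexp q, ← hB, cyclotomic_expand_eq_cyclotomic_mul hp hnd, mul_comm q p]
  have h2 : cyclotomic (p^2) ℤ = ∑ k ∈ range p, (X:ℤ[X])^(p*k) := by
    rw [← hexp p, ← hA, cyclotomic_expand_eq_cyclotomic hp dvd_rfl, ← pow_two]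
  have hX : (X - 1 : ℤ[X]) ≠ 0 := by
    intro h
    have := congrArg (Polynomial.eval 0) h
    simp at this
  have hAB : (∑ i ∈ range p, (X:ℤ[X])^i) * (∑ i ∈ range q, (X:ℤ[X])^(p*i)) =
      ∑ i ∈ range (p*q), (X:ℤ[X])^i := by
    apply mul_right_cancel₀ hX
    have e1 := geom_sum_mul (X : ℤ[X]) p
    have e2 := geom_sum_mul ((X : ℤ[X])^p) q
    have e3 := geom_sum_mul (X : ℤ[X]) (p*q)
    calc (∑ i ∈ range p, (X:ℤ[X])^i) * (∑ i ∈ range q, (X:ℤ[X])^(p*i)) * (X - 1)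
        = (∑ i ∈ range q, ((X:ℤ[X])^p)^i) * ((∑ i ∈ range p, (X:ℤ[X])^i) * (X - 1)) := by
          simp_rw [← pow_mul]; ring
      _ = (∑ i ∈ range q, ((X:ℤ[X])^p)^i) * ((X:ℤ[X])^p - 1) := by rw [e1]
      _ = ((X:ℤ[X])^p)^q - 1 := e2
      _ = (X:ℤ[X])^(p*q) - 1 := by rw [← pow_mul]
      _ = (∑ i ∈ range (p*q), (X:ℤ[X])^i) * (X - 1) := e3.symm
  calc cyclotomic p ℤ * cyclotomic q ℤ * cyclotomic (p * q) ℤ * cyclotomic (p ^ 2) ℤ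
      = (cyclotomic p ℤ * (cyclotomic (p*q) ℤ * cyclotomic q ℤ)) * cyclotomic (p^2) ℤ := by ring
    _ = ((∑ i ∈ range p, (X:ℤ[X])^i) * (∑ i ∈ range q, (X:ℤ[X])^(p*i))) *
          (∑ k ∈ range p, (X:ℤ[X])^(p*k)) := by rw [hA, h1, h2]
    _ = (∑ i ∈ range (p*q), (X:ℤ[X])^i) * (∑ k ∈ range p, (X:ℤ[X])^(p*k)) := by rw [hAB]

theorem stmt_9 (p q : ℕ) (hp : p.Prime) (hq : q.Prime) (hpq : p ≠ q) :
    let f : Polynomial ℤ := Polynomial.cyclotomic p ℤ * Polynomial.cyclotomic q ℤ *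
      Polynomial.cyclotomic (p * q) ℤ * Polynomial.cyclotomic (p ^ 2) ℤ
    {c : ℤ | ∃ j ≤ f.natDegree, f.coeff j = c} = Set.Icc (1 : ℤ) (min p q : ℕ) := by
  intro f
  have hp0 : 0 < p := hp.pos
  have hq0 : 0 < q := hq.pos
  have hf : f = (∑ i ∈ Finset.range (p*q), (X:ℤ[X])^i) *
      (∑ k ∈ Finset.range p, (X:ℤ[X])^(p*k)) := prod_eq9 p q hp hq hpq
  have hcoeff : ∀ j, f.coeff j =
      (((range p).filter (fun k => p*k ≤ j ∧ j - p*k < p*q)).card : ℤ) := by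
    intro j
    rw [hf, Finset.mul_sum, Polynomial.finset_sum_coeff, Finset.card_filter]
    push_cast
    refine Finset.sum_congr rfl fun k _ => ?_
    rw [coeff_mul_X_pow', geom_coeff9]
    split_ifs <;> simp_all
  have hD : ∀ j, p*q + p*p - p - 1 < j → f.coeff j = 0 := by
    intro j hj
    rw [hcoeff]
    norm_cast
    rw [Finset.card_eq_zero, Finset.filter_eq_empty_iff]
    intro k hk
    simp only [Finset.mem_range] at hk
    rintro ⟨h1, h2⟩
    have e2 : p*(k+1) ≤ p*p := mul_le_mul_right hk p
    have e3 : p*(k+1) = p*k + p := by ring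
    exact lin9_3 (p*k) (p*p) (p*q) p j hj h1 h2 (by rw [← e3]; exact e2)
  have hdeg : f.natDegree ≤ p*q + p*p - p - 1 :=
    Polynomial.natDegree_le_iff_coeff_eq_zero.mpr fun m hm => hD m hm
  ext c
  simp only [Set.mem_setOf_eq, Set.mem_Icc]
  constructor
  · rintro ⟨j, hj, rfl⟩
    have hjD : j ≤ p*q + p*p - p - 1 := le_trans hj hdeg
    set S := (range p).filter (fun k => p*k ≤ j ∧ j - p*k < p*q) with hS
    have hne : 1 ≤ S.card := by
      rw [Nat.one_le_iff_ne_zero, ← Nat.pos_iff_ne_zero, Finset.card_pos]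
      refine ⟨min (p-1) (j/p), ?_⟩
      simp only [hS, Finset.mem_filter, Finset.mem_range]
      have hlt : min (p-1) (j/p) < p :=
        lt_of_le_of_lt (min_le_left _ _) (Nat.sub_lt hp0 one_pos)
      have hmul : p * min (p-1) (j/p) ≤ j := by
        calc p * min (p-1) (j/p) ≤ p * (j/p) := mul_le_mul_right (min_le_right _ _) p
          _ ≤ j := Nat.mul_div_le j p
      refine ⟨hlt, hmul, ?_⟩
      rcases le_or_gt (j/p) (p-1) with hc | hc
      · rw [min_eq_right hc]
        exact lin9_1 (p*(j/p)) (j % p) (p*q) p j (Nat.div_add_mod j p)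
          (Nat.mod_lt j hp0) (Nat.le_mul_of_pos_right p hq0)
      · rw [min_eq_left hc.le]
        have e : p*(p-1) + p = p*p := by
          obtain ⟨n, rfl⟩ : ∃ n, p = n+1 := ⟨p-1, (Nat.succ_pred_eq_of_pos hp0).symm⟩
          simp only [Nat.succ_sub_one]
          ring
        exact lin9_2 (p*(p-1)) (p*p) (p*q) p j (Nat.mul_pos hp0 hq0) e hjD
    have hlep : S.card ≤ p := by
      calc S.card ≤ (range p).card := Finset.card_filter_le _ _
        _ = p := Finset.card_range p
    have hleq : S.card ≤ q := by
      have := Finset.card_le_card_of_injOn (s := S) (t := range q) (f := fun k => j/p - k) ?_ ?_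
      · simpa using this
      · intro k hk
        simp only [Finset.mem_coe, hS, Finset.mem_filter, Finset.mem_range] at hk
        obtain ⟨hkp, h1, h2⟩ := hk
        have ha : k ≤ j/p := Nat.le_div_iff_mul_le hp0 |>.mpr (by rwa [mul_comm])
        have hb : j/p < k + q := by
          refine Nat.div_lt_iff_lt_mul hp0 |>.mpr ?_
          exact lin9_4 (p*k) (p*q) ((k+q)*p) j h1 h2 (by ring)
        simp only [Finset.mem_coe, Finset.mem_range]
        exact lin9_6 (j/p) k q ha hb
      · intro a ha b hb hab
        simp only [Finset.mem_coe, hS, Finset.mem_filter, Finset.mem_range] at ha hb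
        have ha' : a ≤ j/p := Nat.le_div_iff_mul_le hp0 |>.mpr (by rw [mul_comm]; exact ha.2.1)
        have hb' : b ≤ j/p := Nat.le_div_iff_mul_le hp0 |>.mpr (by rw [mul_comm]; exact hb.2.1)
        simp only at hab
        exact lin9_7 (j/p) a b ha' hb' hab
    rw [hcoeff]
    constructor
    · exact_mod_cast hne
    · exact_mod_cast le_min hlep hleq
  · rintro ⟨hc1, hc2⟩
    lift c to ℕ using (le_trans zero_le_one hc1)
    have hc2' : c ≤ min p q := by exact_mod_cast hc2
    have hc1' : 1 ≤ c := by exact_mod_cast hc1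
    obtain ⟨m, rfl⟩ : ∃ m, c = m + 1 := ⟨c - 1, (Nat.succ_pred_eq_of_pos hc1').symm⟩
    have hmp : m < p := lt_of_lt_of_le (Nat.lt_succ_self m) (le_trans hc2' (min_le_left p q))
    have hmq : m < q := lt_of_lt_of_le (Nat.lt_succ_self m) (le_trans hc2' (min_le_right p q))
    have hcard : ((range p).filter (fun k => p*k ≤ p*m ∧ p*m - p*k < p*q)) = range (m+1) := by
      ext k
      simp only [Finset.mem_filter, Finset.mem_range]
      constructor
      · rintro ⟨hkp, h1, h2⟩
        exact Nat.lt_succ_of_le (Nat.le_of_mul_le_mul_left h1 hp0)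
      · intro hk
        have hkm : k ≤ m := Nat.lt_succ_iff.mp hk
        refine ⟨lt_of_le_of_lt hkm hmp, mul_le_mul_right hkm p, ?_⟩
        have h3 : p*m < p*(k+q) :=
          mul_lt_mul_of_pos_left (lt_of_lt_of_le hmq (Nat.le_add_left q k)) hp0
        exact lin9_5 (p*m) (p*k) (p*q) (p*(k+q)) (Nat.mul_pos hp0 hq0) h3 (by ring)
    have hval : f.coeff (p*m) = ((m+1 : ℕ) : ℤ) := by
      rw [hcoeff, hcard, Finset.card_range]
    refine ⟨p*m, ?_, ?_⟩
    · apply Polynomial.le_natDegree_of_ne_zero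
      rw [hval]
      exact_mod_cast Nat.succ_ne_zero m
    · rw [hval]
end

section
/- Let p and q be distinct primes. Then every coefficient of the polynomial Φ_p(x)·Φ_{pq}(x)·Φ_{p^2q}(x) lies in {-1, 0, 1}. -/
open Polynomial PowerSeries Finset



noncomputable def geo_s10 (m : ℕ) : ℤ⟦X⟧ := PowerSeries.mk fun n => if m ∣ n then 1 else 0

lemma geo_mul (m : ℕ) (hm : 0 < m) : ((X : ℤ⟦X⟧) ^ m - 1) * geo_s10 m = -1 := by
  ext n
  rw [sub_mul, one_mul, map_sub, PowerSeries.coeff_X_pow_mul']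
  simp only [geo_s10, coeff_mk, map_neg, PowerSeries.coeff_one]
  by_cases h0 : n = 0
  · subst h0; simp [Nat.le_zero, hm.ne']
  · rw [if_neg h0]
    by_cases hle : m ≤ n
    · have h : m ∣ n - m ↔ m ∣ n := by
        constructor
        · intro hd; have := Nat.dvd_add hd (dvd_refl m); rwa [Nat.sub_add_cancel hle] at this
        · intro hd; exact Nat.dvd_sub hd (dvd_refl m)
      rw [if_pos hle]; by_cases hd : m ∣ n
      · rw [if_pos hd, if_pos (h.mpr hd)]; ring
      · rw [if_neg hd, if_neg (fun c => hd (h.mp c))]; ring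
    · have : ¬ m ∣ n := fun hd => hle (Nat.le_of_dvd (Nat.pos_of_ne_zero h0) hd)
      rw [if_neg hle, if_neg this]; ring


def S (q m k : ℕ) : Finset (ℕ × ℕ) :=
  (Finset.HasAntidiagonal.antidiagonal k).filter fun ab => q ∣ ab.1 ∧ m ∣ ab.2

lemma card_small {q m : ℕ} (hc : Nat.Coprime q m) (k : ℕ) :
    ((S q m k).filter fun ab => ab.1 < m * q).card ≤ 1 := by
  apply Finset.card_le_one.mpr
  intro x hx y hy
  simp only [S, Finset.mem_filter, Finset.HasAntidiagonal.mem_antidiagonal] at hx hy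
  obtain ⟨⟨hxk, hxq, hxm⟩, hxlt⟩ := hx
  obtain ⟨⟨hyk, hyq, hym⟩, hylt⟩ := hy
  have key : ∀ a b a' b' : ℕ, a + b = k → a' + b' = k → q ∣ a → q ∣ a' → m ∣ b → m ∣ b' →
      a < m*q → a' < m*q → a ≤ a' → a = a' := by
    intro a b a' b' h1 h2 hq1 hq2 hm1 hm2 hlt1 hlt2 hle
    have hdq : q ∣ a' - a := Nat.dvd_sub hq2 hq1
    have hdm : m ∣ a' - a := by
      have hd : m ∣ b - b' := Nat.dvd_sub hm1 hm2
      have he : a' - a = b - b' := by omega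
      rwa [he]
    have hmq : m * q ∣ a' - a :=
      Nat.Coprime.mul_dvd_of_dvd_of_dvd (Nat.coprime_comm.mp hc) hdm hdq
    have := Nat.eq_zero_of_dvd_of_lt hmq (by omega)
    omega
  rcases le_total x.1 y.1 with h | h
  · have h1 := key x.1 x.2 y.1 y.2 hxk hyk hxq hyq hxm hym hxlt hylt h
    exact Prod.ext h1 (by omega)
  · have h1 := key y.1 y.2 x.1 x.2 hyk hxk hyq hxq hym hxm hylt hxlt h
    exact Prod.ext h1.symm (by omega)

lemma card_mono (q m k : ℕ) : (S q m k).card ≤ (S q m (k + m*q)).card := by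
  apply Finset.card_le_card_of_injOn (fun ab => (ab.1 + m*q, ab.2))
  · intro ab hab
    simp only [mem_coe, S, mem_filter, Finset.HasAntidiagonal.mem_antidiagonal] at *
    obtain ⟨h1, h2, h3⟩ := hab
    exact ⟨by omega, Nat.dvd_add h2 (dvd_mul_left q m), h3⟩
  · intro a _ b _ h
    rw [Prod.ext_iff] at *
    simp only at h
    exact ⟨by omega, h.2⟩

lemma card_upper {q m : ℕ} (hc : Nat.Coprime q m) (k : ℕ) :
    (S q m (k + m*q)).card ≤ (S q m k).card + 1 := by
  rw [← Finset.card_filter_add_card_filter_not (p := fun ab => ab.1 < m*q)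
    (s := S q m (k+m*q))]
  have h1 : ((S q m (k+m*q)).filter fun ab => ¬ ab.1 < m*q).card ≤ (S q m k).card := by
    apply Finset.card_le_card_of_injOn (fun ab => (ab.1 - m*q, ab.2))
    · intro ab hab
      simp only [mem_coe, S, mem_filter, Finset.HasAntidiagonal.mem_antidiagonal, not_lt] at *
      obtain ⟨⟨h1, h2, h3⟩, h4⟩ := hab
      exact ⟨by omega, Nat.dvd_sub h2 (dvd_mul_left q m), h3⟩
    · intro a ha b hb h
      simp only [mem_coe, S, mem_filter, Finset.HasAntidiagonal.mem_antidiagonal, not_lt] at ha hb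
      rw [Prod.ext_iff] at *
      simp only at h
      exact ⟨by omega, h.2⟩
  have h2 := card_small hc (k := k + m*q)
  omega

lemma e_mem {q m : ℕ} (hc : Nat.Coprime q m) (k : ℕ) :
    ((S q m k).card : ℤ) - (if m*q ≤ k then ((S q m (k - m*q)).card : ℤ) else 0)
      ∈ ({0,1} : Set ℤ) := by
  by_cases h : m*q ≤ k
  · rw [if_pos h]
    have h1 := card_mono q m (k - m*q)
    have h2 := card_upper hc (k - m*q)
    rw [Nat.sub_add_cancel h] at h1 h2
    simp only [Set.mem_insert_iff, Set.mem_singleton_iff]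
    omega
  · rw [if_neg h]
    have he : (S q m k).filter (fun ab => ab.1 < m*q) = S q m k := by
      rw [Finset.filter_eq_self]
      intro ab hab
      simp only [S, mem_filter, Finset.HasAntidiagonal.mem_antidiagonal] at hab
      omega
    have h2 := card_small hc k
    rw [he] at h2
    simp only [Set.mem_insert_iff, Set.mem_singleton_iff]
    omega


lemma coeff_geo_mul (q m k : ℕ) :
    (PowerSeries.coeff k) (geo_s10 q * geo_s10 m) = ((S q m k).card : ℤ) := by
  rw [PowerSeries.coeff_mul, S, Finset.card_filter]
  push_cast
  refine Finset.sum_congr rfl fun ab _ => ?_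
  simp only [geo_s10, coeff_mk]
  split_ifs <;> simp_all

theorem stmt_10 (p q : ℕ) (hp : p.Prime) (hq : q.Prime) (hpq : p ≠ q) (k : ℕ) :
    (Polynomial.cyclotomic p ℤ * Polynomial.cyclotomic (p * q) ℤ *
      Polynomial.cyclotomic (p ^ 2 * q) ℤ).coeff k ∈ ({-1, 0, 1} : Set ℤ) := by
  haveI : Fact p.Prime := ⟨hp⟩
  haveI : Fact q.Prime := ⟨hq⟩
  have hqp : ¬ q ∣ p := fun h => hpq ((Nat.prime_dvd_prime_iff_eq hq hp).mp h).symm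
  have hA : cyclotomic p ℤ * (Polynomial.X - 1) = Polynomial.X ^ p - 1 :=
    cyclotomic_prime_mul_X_sub_one ℤ p
  have hB : (cyclotomic (p*q) ℤ * cyclotomic p ℤ) * (Polynomial.X ^ q - 1)
      = Polynomial.X ^ (p*q) - 1 := by
    have h := congrArg (Polynomial.expand ℤ q) hA
    rw [map_mul, map_sub, map_sub, map_one, map_pow, Polynomial.expand_X,
      cyclotomic_expand_eq_cyclotomic_mul hq hqp, ← pow_mul, mul_comm q p] at h
    exact h
  have hC : cyclotomic (p^2) ℤ * (Polynomial.X ^ p - 1) = Polynomial.X ^ (p^2) - 1 := by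
    have h := congrArg (Polynomial.expand ℤ p) hA
    rw [map_mul, map_sub, map_sub, map_one, map_pow, Polynomial.expand_X,
      cyclotomic_expand_eq_cyclotomic hp dvd_rfl, ← pow_mul,
      show p*p = p^2 by ring] at h
    exact h
  have hD : (cyclotomic (p^2*q) ℤ * cyclotomic (p^2) ℤ) * (Polynomial.X ^ (p*q) - 1)
      = Polynomial.X ^ (p^2*q) - 1 := by
    have h := congrArg (Polynomial.expand ℤ p) hB
    rw [map_mul, map_mul, map_sub, map_sub, map_one, map_pow, map_pow, Polynomial.expand_X,
      cyclotomic_expand_eq_cyclotomic hp ⟨q, rfl⟩,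
      cyclotomic_expand_eq_cyclotomic hp dvd_rfl, ← pow_mul, ← pow_mul,
      show p*q*p = p^2*q by ring, show p*p = p^2 by ring, show p*(p*q) = p^2*q by ring] at h
    exact h
  have hkey : ((Polynomial.X : ℤ[X]) ^ q - 1) * ((Polynomial.X : ℤ[X]) ^ (p^2) - 1) *
      (cyclotomic p ℤ * cyclotomic (p*q) ℤ * cyclotomic (p^2*q) ℤ)
      = ((Polynomial.X : ℤ[X]) ^ p - 1) * ((Polynomial.X : ℤ[X]) ^ (p^2*q) - 1) := by
    linear_combination (((Polynomial.X : ℤ[X])^(p^2) - 1) * cyclotomic (p^2*q) ℤ) * hB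
      - (cyclotomic (p^2*q) ℤ * ((Polynomial.X : ℤ[X])^(p*q) - 1)) * hC
      + (((Polynomial.X : ℤ[X])^p - 1)) * hD
  -- move to power series
  have hps : ((PowerSeries.X : ℤ⟦X⟧) ^ q - 1) * ((PowerSeries.X : ℤ⟦X⟧) ^ (p^2) - 1) *
      ((cyclotomic p ℤ * cyclotomic (p*q) ℤ * cyclotomic (p^2*q) ℤ : ℤ[X]) : ℤ⟦X⟧)
      = ((PowerSeries.X : ℤ⟦X⟧) ^ p - 1) * ((PowerSeries.X : ℤ⟦X⟧) ^ (p^2*q) - 1) := by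
    have h := congrArg (fun f : ℤ[X] => (f : ℤ⟦X⟧)) hkey
    simpa only [Polynomial.coe_mul, Polynomial.coe_sub, Polynomial.coe_pow,
      Polynomial.coe_X, Polynomial.coe_one] using h
  have hgq := geo_mul q hq.pos
  have hgm := geo_mul (p^2) (pow_pos hp.pos 2)
  have hP : ((cyclotomic p ℤ * cyclotomic (p*q) ℤ * cyclotomic (p^2*q) ℤ : ℤ[X]) : ℤ⟦X⟧)
      = ((PowerSeries.X : ℤ⟦X⟧) ^ p - 1) * ((PowerSeries.X : ℤ⟦X⟧) ^ (p^2*q) - 1) *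
        (geo_s10 q * geo_s10 (p^2)) := by
    calc ((cyclotomic p ℤ * cyclotomic (p*q) ℤ * cyclotomic (p^2*q) ℤ : ℤ[X]) : ℤ⟦X⟧)
        = ↑(cyclotomic p ℤ * cyclotomic (p*q) ℤ * cyclotomic (p^2*q) ℤ) * -1 * -1 := by ring
      _ = ↑(cyclotomic p ℤ * cyclotomic (p*q) ℤ * cyclotomic (p^2*q) ℤ) *
            (((PowerSeries.X : ℤ⟦X⟧) ^ q - 1) * geo_s10 q) *
            (((PowerSeries.X : ℤ⟦X⟧) ^ (p^2) - 1) * geo_s10 (p^2)) := by rw [hgq, hgm]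
      _ = (((PowerSeries.X : ℤ⟦X⟧) ^ q - 1) * ((PowerSeries.X : ℤ⟦X⟧) ^ (p^2) - 1) *
            ↑(cyclotomic p ℤ * cyclotomic (p*q) ℤ * cyclotomic (p^2*q) ℤ)) *
            (geo_s10 q * geo_s10 (p^2)) := by ring
      _ = _ := by rw [hps]
  have hexp : ((PowerSeries.X : ℤ⟦X⟧) ^ p - 1) * ((PowerSeries.X : ℤ⟦X⟧) ^ (p^2*q) - 1) *
      (geo_s10 q * geo_s10 (p^2))
      = PowerSeries.X ^ (p + p^2*q) * (geo_s10 q * geo_s10 (p^2))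
        - PowerSeries.X ^ p * (geo_s10 q * geo_s10 (p^2))
        - PowerSeries.X ^ (p^2*q) * (geo_s10 q * geo_s10 (p^2)) + (geo_s10 q * geo_s10 (p^2)) := by
    rw [pow_add]; ring
  have hco := congrArg (PowerSeries.coeff k) hP
  rw [Polynomial.coeff_coe, hexp, map_add, map_sub, map_sub,
    PowerSeries.coeff_X_pow_mul', PowerSeries.coeff_X_pow_mul',
    PowerSeries.coeff_X_pow_mul'] at hco
  simp only [coeff_geo_mul] at hco
  have hcop : Nat.Coprime q (p^2) :=
    (Nat.Coprime.pow_right 2 ((Nat.coprime_primes hq hp).mpr (Ne.symm hpq)))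
  have hltM : p < p^2*q := by nlinarith [hp.two_le, hq.two_le]
  simp only [Set.mem_insert_iff, Set.mem_singleton_iff]
  by_cases h1 : p ≤ k
  · by_cases h2 : p + p^2*q ≤ k
    · have e1 := e_mem hcop k
      rw [if_pos (by omega : p^2*q ≤ k)] at e1
      have e2 := e_mem hcop (k - p)
      rw [if_pos (by omega : p^2*q ≤ k - p)] at e2
      rw [if_pos h2, if_pos h1, if_pos (by omega : p^2*q ≤ k),
        show k - (p + p^2*q) = k - p - p^2*q by omega] at hco
      simp only [Set.mem_insert_iff, Set.mem_singleton_iff] at e1 e2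
      omega
    · by_cases h3 : p^2*q ≤ k
      · have e1 := e_mem hcop k
        rw [if_pos h3] at e1
        have e2 := e_mem hcop (k - p)
        rw [if_neg (by omega : ¬ p^2*q ≤ k - p)] at e2
        rw [if_neg h2, if_pos h1, if_pos h3] at hco
        simp only [Set.mem_insert_iff, Set.mem_singleton_iff] at e1 e2
        omega
      · have e1 := e_mem hcop k
        rw [if_neg h3] at e1
        have e2 := e_mem hcop (k - p)
        rw [if_neg (by omega : ¬ p^2*q ≤ k - p)] at e2
        rw [if_neg h2, if_pos h1, if_neg h3] at hco
        simp only [Set.mem_insert_iff, Set.mem_singleton_iff] at e1 e2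
        omega
  · have e1 := e_mem hcop k
    rw [if_neg (by omega : ¬ p^2*q ≤ k)] at e1
    rw [if_neg (by omega : ¬ p + p^2*q ≤ k), if_neg h1,
      if_neg (by omega : ¬ p^2*q ≤ k)] at hco
    simp only [Set.mem_insert_iff, Set.mem_singleton_iff] at e1
    omega
end

section
/- Let p and q be distinct primes. Then every coefficient of the polynomial Φ_q(x)·Φ_{p^2q}(x) lies in {-1, 0, 1}. -/
open Polynomial Finset

lemma keyI (p q : ℕ) (hp : p.Prime) (hq : q.Prime) (hpq : p ≠ q) :
    ((X : ℤ[X]) ^ p - 1) * (X ^ q - 1) * cyclotomic (p * q) ℤ =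
      (X - 1) * (X ^ (p * q) - 1) := by
  haveI := Fact.mk hq
  have hdvd : ¬ p ∣ q := fun h => hpq ((Nat.prime_dvd_prime_iff_eq hp hq).mp h)
  have h1 : expand ℤ p (cyclotomic q ℤ) = cyclotomic (q * p) ℤ * cyclotomic q ℤ :=
    cyclotomic_expand_eq_cyclotomic_mul hp hdvd ℤ
  have h2 : cyclotomic q ℤ * (X - 1) = X ^ q - 1 := cyclotomic_prime_mul_X_sub_one ℤ q
  have h3 : expand ℤ p (cyclotomic q ℤ) * ((X : ℤ[X]) ^ p - 1) = X ^ (p * q) - 1 := by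
    have := congrArg (expand ℤ p) h2
    simp only [map_mul, map_sub, map_pow, expand_X, map_one] at this
    rw [← pow_mul] at this
    exact this
  have h4 : cyclotomic (q * p) ℤ = cyclotomic (p * q) ℤ := by rw [mul_comm]
  rw [h1, h4] at h3
  calc ((X : ℤ[X]) ^ p - 1) * (X ^ q - 1) * cyclotomic (p * q) ℤ
      = (cyclotomic (p*q) ℤ * cyclotomic q ℤ * ((X:ℤ[X])^p - 1)) * (X - 1) := by
        rw [← h2]; ring
    _ = (X - 1) * (X ^ (p * q) - 1) := by rw [h3]; ring

lemma keyII (p q : ℕ) (hp : p.Prime) (hq : q.Prime) (hpq : p ≠ q) (B : ℕ) :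
    cyclotomic (p * q) ℤ * (∑ i ∈ range (q * B), X ^ i) =
      (∑ a ∈ range q, (X : ℤ[X]) ^ (p * a)) * (∑ b ∈ range B, X ^ (q * b)) := by
  have hI := keyI p q hp hq hpq
  set G : ℤ[X] := ∑ i ∈ range (q * B), X ^ i with hG
  set A : ℤ[X] := ∑ a ∈ range q, X ^ (p * a) with hA
  set Bb : ℤ[X] := ∑ b ∈ range B, X ^ (q * b) with hB
  have g1 : G * ((X : ℤ[X]) - 1) = X ^ (q * B) - 1 := geom_sum_mul X (q * B)
  have g2 : A * ((X : ℤ[X]) ^ p - 1) = X ^ (p * q) - 1 := by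
    have := geom_sum_mul ((X : ℤ[X]) ^ p) q
    simpa [← pow_mul, hA] using this
  have g3 : Bb * ((X : ℤ[X]) ^ q - 1) = X ^ (q * B) - 1 := by
    have := geom_sum_mul ((X : ℤ[X]) ^ q) B
    simpa [← pow_mul, hB] using this
  have hC : ((X : ℤ[X]) - 1) * ((X : ℤ[X]) ^ p - 1) * ((X : ℤ[X]) ^ q - 1) ≠ 0 := by
    have h1 : ((X : ℤ[X]) - 1) ≠ 0 := by
      simpa using X_sub_C_ne_zero (1 : ℤ)
    have h2 : ((X : ℤ[X]) ^ p - 1) ≠ 0 := by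
      simpa using X_pow_sub_C_ne_zero hp.pos (1 : ℤ)
    have h3 : ((X : ℤ[X]) ^ q - 1) ≠ 0 := by
      simpa using X_pow_sub_C_ne_zero hq.pos (1 : ℤ)
    exact mul_ne_zero (mul_ne_zero h1 h2) h3
  apply mul_right_cancel₀ hC
  have e1 : cyclotomic (p * q) ℤ * G * (((X : ℤ[X]) - 1) * (X ^ p - 1) * (X ^ q - 1)) =
      (X - 1) * (X ^ (p * q) - 1) * (X ^ (q * B) - 1) := by
    linear_combination (G * ((X : ℤ[X]) - 1)) * hI +
      ((X - 1) * ((X : ℤ[X]) ^ (p * q) - 1)) * g1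
  have e2 : A * Bb * (((X : ℤ[X]) - 1) * (X ^ p - 1) * (X ^ q - 1)) =
      (X - 1) * (X ^ (p * q) - 1) * (X ^ (q * B) - 1) := by
    linear_combination ((X - 1) * Bb * ((X : ℤ[X]) ^ q - 1)) * g2 +
      ((X - 1) * ((X : ℤ[X]) ^ (p * q) - 1)) * g3
  rw [e1, e2]

lemma coeff_mul_geom (f : ℤ[X]) (N k : ℕ) (hk : k < N) :
    (f * ∑ i ∈ range N, X ^ i).coeff k = ∑ j ∈ range (k + 1), f.coeff j := by
  rw [Finset.mul_sum, finset_sum_coeff]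
  simp_rw [coeff_mul_X_pow']
  rw [Finset.sum_ite, Finset.sum_const_zero, add_zero]
  have hfil : (range N).filter (fun i => i ≤ k) = range (k + 1) := by
    ext i; simp; omega
  rw [hfil]
  have := Finset.sum_range_reflect (fun j => f.coeff j) (k + 1)
  simpa using this

lemma coeff_prod_mem (p q B k : ℕ) (hp : p.Prime) (hq : q.Prime) (hpq : p ≠ q) :
    ((∑ a ∈ range q, (X : ℤ[X]) ^ (p * a)) * (∑ b ∈ range B, X ^ (q * b))).coeff k ∈
      ({0, 1} : Set ℤ) := by
  have hco : Nat.Coprime p q := (Nat.coprime_primes hp hq).mpr hpq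
  have huniq : ∀ a b a' b' : ℕ, a < q → a' < q → p * a + q * b = k → p * a' + q * b' = k →
      a = a' ∧ b = b' := by
    intro a b a' b' ha ha' h h'
    have h0 : p * a + q * b = p * a' + q * b' := h.trans h'.symm
    have hmm : p * a % q = p * a' % q := by
      conv_lhs => rw [← Nat.add_mul_mod_self_left (p * a) q b]
      conv_rhs => rw [← Nat.add_mul_mod_self_left (p * a') q b']
      rw [h0]
    have hmod : a ≡ a' [MOD q] := Nat.ModEq.cancel_left_of_coprime hco.symm hmm
    have haa : a = a' := by
      have := hmod
      unfold Nat.ModEq at this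
      rwa [Nat.mod_eq_of_lt ha, Nat.mod_eq_of_lt ha'] at this
    subst haa
    refine ⟨rfl, Nat.eq_of_mul_eq_mul_left hq.pos (Nat.add_left_cancel h0)⟩
  rw [Finset.sum_mul_sum]
  rw [finset_sum_coeff]
  simp_rw [finset_sum_coeff, ← pow_add, coeff_X_pow]
  by_cases hex : ∃ a ∈ range q, ∃ b ∈ range B, p * a + q * b = k
  · obtain ⟨a0, ha0, b0, hb0, he⟩ := hex
    simp only [Finset.mem_range] at ha0 hb0
    have : (∑ a ∈ range q, ∑ b ∈ range B, if k = p * a + q * b then (1 : ℤ) else 0) = 1 := by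
      rw [Finset.sum_eq_single a0]
      · rw [Finset.sum_eq_single b0]
        · rw [if_pos he.symm]
        · intro b hb hbne
          rw [if_neg]
          intro hc
          exact hbne (huniq a0 b a0 b0 ha0 ha0 hc.symm he).2
        · intro hc; exact absurd (Finset.mem_range.mpr hb0) hc
      · intro a ha hane
        apply Finset.sum_eq_zero
        intro b hb
        rw [if_neg]
        intro hc
        exact hane (huniq a b a0 b0 (Finset.mem_range.mp ha) ha0 hc.symm he).1
      · intro hc; exact absurd (Finset.mem_range.mpr ha0) hc
    rw [this]; right; rfl
  · push_neg at hex
    have : (∑ a ∈ range q, ∑ b ∈ range B, if k = p * a + q * b then (1 : ℤ) else 0) = 0 := by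
      apply Finset.sum_eq_zero
      intro a ha
      apply Finset.sum_eq_zero
      intro b hb
      exact if_neg (fun hc => hex a ha b hb hc.symm)
    rw [this]; left; rfl

lemma partial_sum_mem (p q : ℕ) (hp : p.Prime) (hq : q.Prime) (hpq : p ≠ q) (m : ℕ) :
    (∑ j ∈ range m, (cyclotomic (p * q) ℤ).coeff j) ∈ ({0, 1} : Set ℤ) := by
  rcases m with _ | k
  · left; simp
  · have hk : k < q * (k + 1) := by
      have := hq.two_le
      calc k < k + 1 := Nat.lt_succ_self k
        _ ≤ q * (k + 1) := Nat.le_mul_of_pos_left _ hq.pos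
    rw [← coeff_mul_geom (cyclotomic (p * q) ℤ) (q * (k + 1)) k hk,
      keyII p q hp hq hpq (k + 1)]
    exact coeff_prod_mem p q (k + 1) k hp hq hpq

theorem stmt_11 (p q : ℕ) (hp : p.Prime) (hq : q.Prime) (hpq : p ≠ q) (k : ℕ) :
    (Polynomial.cyclotomic q ℤ * Polynomial.cyclotomic (p ^ 2 * q) ℤ).coeff k ∈
      ({-1, 0, 1} : Set ℤ) := by
  haveI := Fact.mk hq
  set Φ : ℤ[X] := cyclotomic (p * q) ℤ with hΦ
  have hexp : cyclotomic (p ^ 2 * q) ℤ = expand ℤ p Φ := by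
    have h := cyclotomic_expand_eq_cyclotomic hp (dvd_mul_right p q) ℤ
    rw [show p * q * p = p ^ 2 * q by ring] at h
    exact h.symm
  rw [mul_comm, hexp, cyclotomic_prime ℤ q, Finset.mul_sum, finset_sum_coeff]
  simp_rw [coeff_mul_X_pow', coeff_expand hp.pos]
  -- now: ∑ i ∈ range q, if i ≤ k then (if p ∣ k - i then Φ.coeff ((k-i)/p) else 0) else 0
  have step1 : (∑ i ∈ range q, if i ≤ k then (if p ∣ (k - i) then Φ.coeff ((k - i) / p) else 0) else 0)
      = ∑ i ∈ (range q).filter (fun i => i ≤ k ∧ p ∣ (k - i)), Φ.coeff ((k - i) / p) := by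
    rw [Finset.sum_filter]
    apply Finset.sum_congr rfl
    intro i _
    by_cases h1 : i ≤ k <;> by_cases h2 : p ∣ (k - i) <;> simp [h1, h2]
  rw [step1]
  have step2 : (∑ i ∈ (range q).filter (fun i => i ≤ k ∧ p ∣ (k - i)), Φ.coeff ((k - i) / p))
      = ∑ j ∈ (range (k / p + 1)).filter (fun j => k < p * j + q), Φ.coeff j := by
    refine Finset.sum_nbij' (fun i => (k - i) / p) (fun j => k - p * j) ?_ ?_ ?_ ?_ ?_
    · intro i hi
      simp only [Finset.mem_filter, Finset.mem_range] at hi ⊢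
      obtain ⟨hiq, hik, hdvd⟩ := hi
      have hm : p * ((k - i) / p) = k - i := Nat.mul_div_cancel' hdvd
      constructor
      · have : (k - i) / p ≤ k / p := Nat.div_le_div_right (Nat.sub_le k i)
        omega
      · omega
    · intro j hj
      simp only [Finset.mem_filter, Finset.mem_range] at hj ⊢
      obtain ⟨hjk, hq'⟩ := hj
      have hpj : p * j ≤ k := by
        have : j ≤ k / p := by omega
        calc p * j = j * p := mul_comm _ _
          _ ≤ k := (Nat.le_div_iff_mul_le hp.pos).mp this
      refine ⟨by omega, by omega, ⟨j, by omega⟩⟩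
    · intro i hi
      simp only [Finset.mem_filter, Finset.mem_range] at hi
      obtain ⟨hiq, hik, hdvd⟩ := hi
      have hm : p * ((k - i) / p) = k - i := Nat.mul_div_cancel' hdvd
      omega
    · intro j hj
      simp only [Finset.mem_filter, Finset.mem_range] at hj
      obtain ⟨hjk, hq'⟩ := hj
      have hpj : p * j ≤ k := by
        have : j ≤ k / p := by omega
        calc p * j = j * p := mul_comm _ _
          _ ≤ k := (Nat.le_div_iff_mul_le hp.pos).mp this
      have : k - (k - p * j) = p * j := by omega
      rw [this, Nat.mul_div_cancel_left _ hp.pos]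
    · intro i _; rfl
  rw [step2]
  have split := Finset.sum_filter_add_sum_filter_not (range (k / p + 1))
    (fun j => k < p * j + q) (fun j => Φ.coeff j)
  have hS1 := partial_sum_mem p q hp hq hpq (k / p + 1)
  by_cases hqk : q ≤ k
  · have hfilnot : (range (k / p + 1)).filter (fun j => ¬ k < p * j + q)
        = range ((k - q) / p + 1) := by
      ext j
      simp only [Finset.mem_filter, Finset.mem_range, Nat.lt_succ_iff, not_lt]
      have hj' : j * p = p * j := Nat.mul_comm j p
      constructor
      · rintro ⟨h1, h2⟩
        rw [Nat.le_div_iff_mul_le hp.pos]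
        omega
      · intro h
        rw [Nat.le_div_iff_mul_le hp.pos] at h
        constructor
        · rw [Nat.le_div_iff_mul_le hp.pos]
          omega
        · omega
    rw [hfilnot] at split
    have hS2 := partial_sum_mem p q hp hq hpq ((k - q) / p + 1)
    rw [← hΦ] at hS1 hS2
    have : (∑ j ∈ (range (k / p + 1)).filter (fun j => k < p * j + q), Φ.coeff j)
        = (∑ j ∈ range (k / p + 1), Φ.coeff j) - ∑ j ∈ range ((k - q) / p + 1), Φ.coeff j := by
      linarith [split]
    rw [this]
    simp only [Set.mem_insert_iff, Set.mem_singleton_iff] at hS1 hS2 ⊢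
    rcases hS1 with h1 | h1 <;> rcases hS2 with h2 | h2 <;> rw [h1, h2] <;> norm_num
  · have hfilnot : (range (k / p + 1)).filter (fun j => ¬ k < p * j + q) = ∅ := by
      ext j
      simp only [Finset.mem_filter, Finset.mem_range, not_lt, Finset.notMem_empty,
        iff_false, not_and]
      intro _
      omega
    rw [hfilnot, Finset.sum_empty, add_zero] at split
    rw [← hΦ] at hS1
    rw [split]
    simp only [Set.mem_insert_iff, Set.mem_singleton_iff] at hS1 ⊢
    rcases hS1 with h1 | h1 <;> rw [h1] <;> norm_num
end

section
/- Let a and b be coprime integers, each exceeding one. Let b^{-1} denote the least non-negative residue of the inverse of b modulo a, and a^{-1} the least non-negative residue of the inverse of a modulo b. Then gcd(a - b^{-1}, a^{-1}) = 1 and gcd(b^{-1}, b - a^{-1}) = 1. -/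
theorem stmt_12 (a b : ℕ) (ha : 1 < a) (hb : 1 < b) (hab : Nat.Coprime a b)
    (binv ainv : ℕ) (hbinv : binv < a) (hbinv' : b * binv ≡ 1 [MOD a])
    (hainv : ainv < b) (hainv' : a * ainv ≡ 1 [MOD b]) :
    Nat.gcd (a - binv) ainv = 1 ∧ Nat.gcd binv (b - ainv) = 1 := by
  -- ainv and binv are positive
  have hainv0 : 1 ≤ ainv := by
    by_contra h
    push_neg at h
    interval_cases ainv
    have : (0 : ℕ) % b = 1 % b := by simpa [Nat.ModEq] using hainv'
    rw [Nat.zero_mod, Nat.mod_eq_of_lt hb] at this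
    omega
  have hbinv0 : 1 ≤ binv := by
    by_contra h
    push_neg at h
    interval_cases binv
    have : (0 : ℕ) % a = 1 % a := by simpa [Nat.ModEq] using hbinv'
    rw [Nat.zero_mod, Nat.mod_eq_of_lt ha] at this
    omega
  -- Key identity: a*ainv + b*binv = a*b + 1
  have hma : a * ainv + b * binv ≡ 1 [MOD a] := by
    have h0 : a * ainv ≡ 0 [MOD a] := (Nat.modEq_zero_iff_dvd).mpr ⟨ainv, rfl⟩
    simpa using h0.add hbinv'
  have hmb : a * ainv + b * binv ≡ 1 [MOD b] := by
    have h0 : b * binv ≡ 0 [MOD b] := (Nat.modEq_zero_iff_dvd).mpr ⟨binv, rfl⟩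
    simpa using hainv'.add h0
  have hmab : a * ainv + b * binv ≡ 1 [MOD a * b] :=
    (Nat.modEq_and_modEq_iff_modEq_mul hab).mp ⟨hma, hmb⟩
  have hle : 1 ≤ a * ainv + b * binv := by nlinarith
  have hdvd : a * b ∣ (a * ainv + b * binv) - 1 :=
    (Nat.modEq_iff_dvd' hle).mp hmab.symm
  have hub : a * ainv + b * binv < 2 * (a * b) := by
    nlinarith
  have hlb : a * b ≤ (a * ainv + b * binv) - 1 := by
    apply Nat.le_of_dvd _ hdvd
    have h1 : a ≤ a * ainv := Nat.le_mul_of_pos_right a (by omega)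
    omega
  obtain ⟨k, hk⟩ := hdvd
  have hk1 : k = 1 := by
    rcases Nat.lt_or_ge k 2 with h2 | h2
    · rcases Nat.lt_or_ge k 1 with h1 | h1
      · interval_cases k; simp at hk; omega
      · omega
    · exfalso
      have : a * b * 2 ≤ a * b * k := Nat.mul_le_mul_left _ h2
      omega
  subst hk1
  rw [Nat.mul_one] at hk
  have key : a * ainv + b * binv = a * b + 1 := by omega
  constructor
  · -- gcd (a - binv) ainv = 1
    set d := Nat.gcd (a - binv) ainv with hd
    have hd1 : d ∣ a - binv := Nat.gcd_dvd_left _ _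
    have hd2 : d ∣ ainv := Nat.gcd_dvd_right _ _
    have heq : b * (a - binv) = a * ainv - 1 := by
      have hba : binv ≤ a := hbinv.le
      rw [Nat.mul_sub, Nat.mul_comm b a]
      have h1 : a ≤ a * ainv := Nat.le_mul_of_pos_right a (by omega)
      omega
    have hd3 : d ∣ a * ainv - 1 := heq ▸ hd1.mul_left b
    have hd4 : d ∣ a * ainv := hd2.mul_left a
    have h1 : a ≤ a * ainv := Nat.le_mul_of_pos_right a (by omega)
    have hd5 : d ∣ 1 := by
      have := Nat.dvd_sub hd4 hd3
      rwa [Nat.sub_sub_self (by omega)] at this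
    exact Nat.eq_one_of_dvd_one hd5
  · -- gcd binv (b - ainv) = 1
    set d := Nat.gcd binv (b - ainv) with hd
    have hd1 : d ∣ binv := Nat.gcd_dvd_left _ _
    have hd2 : d ∣ b - ainv := Nat.gcd_dvd_right _ _
    have heq : a * (b - ainv) = b * binv - 1 := by
      have hba : ainv ≤ b := hainv.le
      have : a * (b - ainv) = a * b - a * ainv := by rw [Nat.mul_sub]
      rw [this]
      have h1 : b ≤ b * binv := Nat.le_mul_of_pos_right b (by omega)
      omega
    have hd3 : d ∣ b * binv - 1 := heq ▸ hd2.mul_left a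
    have hd4 : d ∣ b * binv := hd1.mul_left b
    have h1 : b ≤ b * binv := Nat.le_mul_of_pos_right b (by omega)
    have hd5 : d ∣ 1 := by
      have := Nat.dvd_sub hd4 hd3
      rwa [Nat.sub_sub_self (by omega)] at this
    exact Nat.eq_one_of_dvd_one hd5
end

section
/- Let a > 1 and b > 1 be odd coprime integers. Let r be the least non-negative residue of the inverse of a modulo b and s the least non-negative residue of the inverse of b modulo a. Then r ≡ s (mod 2). -/
theorem stmt_13 (a b : ℕ) (ha : 1 < a) (hb : 1 < b) (hao : Odd a) (hbo : Odd b)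
    (hab : Nat.Coprime a b)
    (r s : ℕ) (hr : r < b) (hr' : a * r ≡ 1 [MOD b])
    (hs : s < a) (hs' : b * s ≡ 1 [MOD a]) :
    r % 2 = s % 2 := by
  -- r, s are positive
  have hr0 : 0 < r := by
    rcases Nat.eq_zero_or_pos r with h | h
    · exfalso
      have h' := hr'
      rw [h, Nat.mul_zero] at h'
      have h1 : b ∣ 1 := Nat.modEq_zero_iff_dvd.mp h'.symm
      have := Nat.le_of_dvd one_pos h1
      omega
    · exact h
  have hs0 : 0 < s := by
    rcases Nat.eq_zero_or_pos s with h | h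
    · exfalso
      have h' := hs'
      rw [h, Nat.mul_zero] at h'
      have h1 : a ∣ 1 := Nat.modEq_zero_iff_dvd.mp h'.symm
      have := Nat.le_of_dvd one_pos h1
      omega
    · exact h
  -- a*r + b*s ≡ 1 [MOD a*b]
  have h1 : a * r + b * s ≡ 1 [MOD a] := by
    calc a * r + b * s ≡ 0 + b * s [MOD a] := by
            exact Nat.ModEq.add_right _ ((Nat.modEq_zero_iff_dvd.mpr ⟨r, rfl⟩))
      _ = b * s := by ring
      _ ≡ 1 [MOD a] := hs'
  have h2 : a * r + b * s ≡ 1 [MOD b] := by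
    calc a * r + b * s ≡ a * r + 0 [MOD b] := by
            exact Nat.ModEq.add_left _ ((Nat.modEq_zero_iff_dvd.mpr ⟨s, rfl⟩))
      _ = a * r := by ring
      _ ≡ 1 [MOD b] := hr'
  have hmul : a * r + b * s ≡ 1 [MOD a * b] :=
    (Nat.modEq_and_modEq_iff_modEq_mul hab).mp ⟨h1, h2⟩
  -- lower and upper bounds
  have hlow : 2 ≤ a * r := le_trans ha (Nat.le_mul_of_pos_right a hr0)
  have hn1 : 1 ≤ a * r + b * s := by linarith [Nat.zero_le (b * s)]
  have hub' : a * r + b * s + a + b ≤ 2 * (a * b) := by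
    have hA : a * (r + 1) ≤ a * b := Nat.mul_le_mul_left a (by omega)
    have hB : b * (s + 1) ≤ b * a := Nat.mul_le_mul_left b (by omega)
    nlinarith
  -- hence a*b ∣ a*r + b*s - 1
  have hdvd : a * b ∣ a * r + b * s - 1 :=
    (Nat.modEq_iff_dvd' hn1).mp hmul.symm
  obtain ⟨k, hk⟩ := hdvd
  have hk' : a * r + b * s = a * b * k + 1 := by
    rw [← Nat.sub_add_cancel hn1, hk]
  have hkpos : 1 ≤ k := by
    rcases Nat.eq_zero_or_pos k with h | h
    · exfalso; rw [h, Nat.mul_zero] at hk'; linarith [Nat.zero_le (b * s)]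
    · exact h
  have hklt : k < 2 := by
    have habpos : 0 < a * b := Nat.mul_pos (by omega) (by omega)
    have h : a * b * k < a * b * 2 := by linarith
    exact Nat.lt_of_mul_lt_mul_left h
  have hk1 : k = 1 := by omega
  have key : a * r + b * s = a * b + 1 := by
    rw [hk1, Nat.mul_one] at hk'; exact hk'
  -- parity
  have hA : a ≡ 1 [MOD 2] := by
    show a % 2 = 1 % 2
    simp [Nat.odd_iff.mp hao]
  have hB : b ≡ 1 [MOD 2] := by
    show b % 2 = 1 % 2
    simp [Nat.odd_iff.mp hbo]
  have hsum : 1 * r + 1 * s ≡ 1 * 1 + 1 [MOD 2] := by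
    calc 1 * r + 1 * s ≡ a * r + b * s [MOD 2] :=
            ((hA.symm.mul_right r).add (hB.symm.mul_right s))
      _ = a * b + 1 := key
      _ ≡ 1 * 1 + 1 [MOD 2] := (hA.mul hB).add_right 1
  have hfin : (r + s) % 2 = 0 := by
    have := hsum
    simpa [Nat.ModEq, one_mul] using this
  omega
end

section
/- Let p and q be distinct primes. Then {1/q; p^2}·q + {1/p; q}·p^2 = {-1/q; p}·p·q + {-1/p^2; q}·p^2 + p + 1, where {1/m; n} is the least non-negative integer t with m·t ≡ 1 (mod n), and {-1/m; n} is the least non-negative integer t with m·t ≡ -1 (mod n). -/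
theorem stmt_14 (p q : ℕ) (hp : p.Prime) (hq : q.Prime) (hpq : p ≠ q)
    (t1 t2 t3 t4 : ℕ)
    (ht1 : t1 < p ^ 2) (ht1' : q * t1 ≡ 1 [MOD p ^ 2])
    (ht2 : t2 < q) (ht2' : p * t2 ≡ 1 [MOD q])
    (ht3 : t3 < p) (ht3' : p ∣ q * t3 + 1)
    (ht4 : t4 < q) (ht4' : q ∣ p ^ 2 * t4 + 1) :
    t1 * q + t2 * p ^ 2 = t3 * p * q + t4 * p ^ 2 + p + 1 := by
  have hp1 : 1 < p := hp.one_lt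
  have hq1 : 1 < q := hq.one_lt
  have hp2 : 1 < p ^ 2 := Nat.one_lt_pow (by norm_num) hp1
  -- q * t1 ≥ 1
  have h1 : 1 ≤ q * t1 := by
    rcases Nat.eq_zero_or_pos (q * t1) with h | h
    · exfalso
      have := ht1'
      unfold Nat.ModEq at this
      rw [h, Nat.zero_mod, Nat.mod_eq_of_lt hp2] at this
      exact one_ne_zero this.symm
    · exact h
  have h2 : 1 ≤ p * t2 := by
    rcases Nat.eq_zero_or_pos (p * t2) with h | h
    · exfalso
      have := ht2'
      unfold Nat.ModEq at this
      rw [h, Nat.zero_mod, Nat.mod_eq_of_lt hq1] at this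
      exact one_ne_zero this.symm
    · exact h
  obtain ⟨a, ha⟩ := (Nat.modEq_iff_dvd' h1).mp ht1'.symm
  obtain ⟨b, hb⟩ := (Nat.modEq_iff_dvd' h2).mp ht2'.symm
  have ha' : q * t1 = 1 + p ^ 2 * a := by omega
  have hb' : p * t2 = 1 + q * b := by omega
  have hcop : Nat.Coprime p q := (Nat.coprime_primes hp hq).mpr hpq
  -- a < q and b < p
  have haq : a < q := by
    have : 1 + p ^ 2 * a ≤ q * (p ^ 2 - 1) :=
      ha' ▸ Nat.mul_le_mul_left q (by omega)
    nlinarith [sq_nonneg p]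
  have hbp : b < p := by
    have : 1 + q * b ≤ p * (q - 1) :=
      hb' ▸ Nat.mul_le_mul_left p (by omega)
    nlinarith
  -- a = t4
  have hqa : q ∣ p ^ 2 * a + 1 := ⟨t1, by omega⟩
  have hat4 : a = t4 := by
    have hmod : p ^ 2 * a ≡ p ^ 2 * t4 [MOD q] := by
      have h1' : p ^ 2 * a + 1 ≡ 0 [MOD q] := (Nat.modEq_zero_iff_dvd).mpr hqa
      have h2' : p ^ 2 * t4 + 1 ≡ 0 [MOD q] := (Nat.modEq_zero_iff_dvd).mpr ht4'
      exact Nat.ModEq.add_right_cancel' 1 (h1'.trans h2'.symm)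
    have := hmod.cancel_left_of_coprime (hcop.symm.pow_right 2)
    exact Nat.ModEq.eq_of_lt_of_lt this haq ht4
  -- b = t3
  have hpb : p ∣ q * b + 1 := ⟨t2, by omega⟩
  have hbt3 : b = t3 := by
    have hmod : q * b ≡ q * t3 [MOD p] := by
      have h1' : q * b + 1 ≡ 0 [MOD p] := (Nat.modEq_zero_iff_dvd).mpr hpb
      have h2' : q * t3 + 1 ≡ 0 [MOD p] := (Nat.modEq_zero_iff_dvd).mpr ht3'
      exact Nat.ModEq.add_right_cancel' 1 (h1'.trans h2'.symm)
    have := hmod.cancel_left_of_coprime hcop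
    exact Nat.ModEq.eq_of_lt_of_lt this hbp ht3
  have e1 : t1 * q = 1 + p ^ 2 * t4 := by rw [← hat4, mul_comm]; exact ha'
  have e2 : t2 * p ^ 2 = p + p * q * t3 := by
    rw [← hbt3, show t2 * p ^ 2 = p * (p * t2) by ring, hb']; ring
  rw [e1, e2]; ring
end

section
/- Let n be a squarefree positive integer with at most two distinct odd prime factors (i.e., n or n/2 is a product of at most two odd primes, possibly times 2). Then the inverse cyclotomic polynomial Ψ_n(x) = (x^n - 1)/Φ_n(x) has all coefficients in {-1, 0, 1}. -/
open Polynomial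

private lemma Xpow_sub_one_ne_zero (m : ℕ) (hm : 0 < m) : (X ^ m - 1 : ℤ[X]) ≠ 0 := by
  intro h
  have h0 : ((X : ℤ[X]) ^ m - 1).coeff m = 0 := by rw [h]; simp
  rw [Polynomial.coeff_sub, coeff_X_pow, if_pos rfl, Polynomial.coeff_one,
    if_neg hm.ne'] at h0
  norm_num at h0

private lemma X_add_one_ne_zero : (X + 1 : ℤ[X]) ≠ 0 := by
  intro h
  have h0 := congrArg (fun P : ℤ[X] => P.coeff 0) h
  simp at h0

private lemma helper1 (m : ℕ) (Q : ℤ[X]) (hQ : ∀ k, Q.coeff k = 0 ∨ Q.coeff k = 1) (k : ℕ) :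
    ((X ^ m - 1) * Q).coeff k ∈ ({-1, 0, 1} : Set ℤ) := by
  have h : (X ^ m - 1) * Q = Q * X ^ m - Q := by ring
  rw [h, Polynomial.coeff_sub, Polynomial.coeff_mul_X_pow']
  simp only [Set.mem_insert_iff, Set.mem_singleton_iff]
  split_ifs <;> rcases hQ (k - m) with h1 | h1 <;> rcases hQ k with h2 | h2 <;>
    simp [h1, h2]

private lemma helper2 (m : ℕ) (Q : ℤ[X])
    (hQmem : ∀ k, Q.coeff k ∈ ({-1, 0, 1} : Set ℤ))
    (hv : ∀ k, m ≤ k → Q.coeff k = 0) (k : ℕ) :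
    ((X ^ m - 1) * Q).coeff k ∈ ({-1, 0, 1} : Set ℤ) := by
  have hQ : ∀ k, Q.coeff k = -1 ∨ Q.coeff k = 0 ∨ Q.coeff k = 1 := by
    intro j
    simpa only [Set.mem_insert_iff, Set.mem_singleton_iff] using hQmem j
  have h : (X ^ m - 1) * Q = Q * X ^ m - Q := by ring
  rw [h, Polynomial.coeff_sub, Polynomial.coeff_mul_X_pow']
  simp only [Set.mem_insert_iff, Set.mem_singleton_iff]
  split_ifs with hmk
  · rw [hv k (le_trans hmk (le_refl k))]
    rcases hQ (k - m) with h1 | h1 | h1 <;> simp [h1]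
  · rcases hQ k with h1 | h1 | h1 <;> simp [h1]

private lemma coeff_geom (p k : ℕ) :
    (∑ i ∈ Finset.range p, (X : ℤ[X]) ^ i).coeff k = if k < p then 1 else 0 := by
  rw [Polynomial.finset_sum_coeff]
  simp [coeff_X_pow, Finset.sum_ite_eq, Finset.mem_range]

private lemma coeff_B (q k : ℕ) :
    (∑ i ∈ Finset.range q, (X : ℤ[X]) ^ i * (-1) ^ (q - 1 - i)).coeff k
      = if k < q then (-1) ^ (q - 1 - k) else 0 := by
  have h : ∀ i : ℕ, (X : ℤ[X]) ^ i * (-1) ^ (q - 1 - i)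
      = C ((-1 : ℤ) ^ (q - 1 - i)) * X ^ i := by
    intro i; rw [mul_comm]; congr 1; simp
  rw [Polynomial.finset_sum_coeff]
  simp only [h, Polynomial.coeff_C_mul, coeff_X_pow, mul_ite, mul_one, mul_zero]
  simp [Finset.sum_ite_eq, Finset.mem_range]

-- S := (X^p+1) * B
private lemma coeff_S (p q k : ℕ) :
    (((X : ℤ[X]) ^ p + 1) * ∑ i ∈ Finset.range q, (X : ℤ[X]) ^ i * (-1) ^ (q - 1 - i)).coeff k
      = (if p ≤ k then (if k - p < q then ((-1 : ℤ)) ^ (q - 1 - (k - p)) else 0) else 0)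
        + (if k < q then ((-1 : ℤ)) ^ (q - 1 - k) else 0) := by
  set B := ∑ i ∈ Finset.range q, (X : ℤ[X]) ^ i * (-1) ^ (q - 1 - i) with hB
  have h : ((X : ℤ[X]) ^ p + 1) * B = B * X ^ p + B := by ring
  rw [h, Polynomial.coeff_add, Polynomial.coeff_mul_X_pow', coeff_B, coeff_B]

private lemma S_mem (p q : ℕ) (hpodd : Odd p) (k : ℕ) :
    (((X : ℤ[X]) ^ p + 1) * ∑ i ∈ Finset.range q, (X : ℤ[X]) ^ i * (-1) ^ (q - 1 - i)).coeff k
      ∈ ({-1, 0, 1} : Set ℤ) := by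
  rw [coeff_S]
  simp only [Set.mem_insert_iff, Set.mem_singleton_iff]
  split_ifs with h1 h2 h3
  · -- both terms present; they cancel
    have he : q - 1 - (k - p) = (q - 1 - k) + p := by omega
    rw [he, pow_add, hpodd.neg_one_pow]
    right; left; ring
  · rcases Nat.even_or_odd (q - 1 - (k - p)) with h | h
    · rw [h.neg_one_pow]; right; right; ring
    · rw [h.neg_one_pow]; left; ring
  · rcases Nat.even_or_odd (q - 1 - k) with h | h
    · rw [h.neg_one_pow]; right; right; ring
    · rw [h.neg_one_pow]; left; ring
  · right; left; ring
  · rcases Nat.even_or_odd (q - 1 - k) with h | h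
    · rw [h.neg_one_pow]; right; right; ring
    · rw [h.neg_one_pow]; left; ring
  · right; left; ring

private lemma S_vanish (p q : ℕ) (hp2 : 2 ≤ p) (hq2 : 2 ≤ q) (k : ℕ) (hk : p * q ≤ k) :
    (((X : ℤ[X]) ^ p + 1) * ∑ i ∈ Finset.range q, (X : ℤ[X]) ^ i * (-1) ^ (q - 1 - i)).coeff k
      = 0 := by
  have h2 : p + q ≤ p * q := by nlinarith
  have h4 : p + q ≤ k := le_trans h2 hk
  rw [coeff_S]
  clear hk h2
  split_ifs <;> first | ring1 | (exfalso; omega)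

private lemma case_pq (p q : ℕ) (hp : p.Prime) (hq : q.Prime) (hne : p ≠ q) :
    ((X ^ p - 1) * cyclotomic q ℤ) * cyclotomic (p * q) ℤ = X ^ (p * q) - 1 := by
  haveI := Fact.mk hq
  have hnd : ¬ p ∣ q := by
    rw [Nat.prime_dvd_prime_iff_eq hp hq]; exact hne
  have hexp := cyclotomic_expand_eq_cyclotomic_mul hp hnd ℤ
  rw [mul_comm q p] at hexp
  have key : (expand ℤ p) (cyclotomic q ℤ * (X - 1)) = X ^ (p * q) - 1 := by
    rw [cyclotomic_prime_mul_X_sub_one, map_sub, map_one, map_pow, expand_X, ← pow_mul]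
  rw [map_mul, hexp, map_sub, map_one, expand_X] at key
  rw [← key]; ring

private lemma two_q_aux (q : ℕ) (hq : q.Prime) (hq2 : q ≠ 2) :
    cyclotomic (2 * q) ℤ * (X + 1) = X ^ q + 1 := by
  haveI := Fact.mk hq
  have h := case_pq 2 q Nat.prime_two hq (fun h => hq2 h.symm)
  -- ((X^2-1) * Φ_q) * Φ_{2q} = X^{2q} - 1
  have hq1 : 0 < q := hq.pos
  have hXq : (X ^ q - 1 : ℤ[X]) ≠ 0 := Xpow_sub_one_ne_zero q hq1
  have hprime : cyclotomic q ℤ * (X - 1) = X ^ q - 1 := cyclotomic_prime_mul_X_sub_one ℤ q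
  apply mul_right_cancel₀ hXq
  calc cyclotomic (2 * q) ℤ * (X + 1) * (X ^ q - 1)
      = ((X ^ 2 - 1) * cyclotomic q ℤ) * cyclotomic (2 * q) ℤ := by
        rw [← hprime]; ring
    _ = X ^ (2 * q) - 1 := h
    _ = (X ^ q + 1) * (X ^ q - 1) := by rw [mul_comm 2 q, pow_mul]; ring

private lemma B_eq (q : ℕ) (hq : q.Prime) (hq2 : q ≠ 2) :
    (∑ i ∈ Finset.range q, (X : ℤ[X]) ^ i * (-1) ^ (q - 1 - i)) = cyclotomic (2 * q) ℤ := by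
  have hqodd : Odd q := hq.odd_of_ne_two hq2
  have hB : (∑ i ∈ Finset.range q, (X : ℤ[X]) ^ i * (-1) ^ (q - 1 - i)) * (X + 1)
      = X ^ q + 1 := by
    have := geom_sum₂_mul (X : ℤ[X]) (-1) q
    rw [sub_neg_eq_add, hqodd.neg_one_pow, sub_neg_eq_add] at this
    exact this
  apply mul_right_cancel₀ X_add_one_ne_zero
  rw [hB, two_q_aux q hq hq2]

private lemma case_2pq (p q : ℕ) (hp : p.Prime) (hq : q.Prime) (hp2 : p ≠ 2) (hq2 : q ≠ 2)
    (hne : p ≠ q) :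
    ((X ^ (p * q) - 1) *
        (((X : ℤ[X]) ^ p + 1) * ∑ i ∈ Finset.range q, (X : ℤ[X]) ^ i * (-1) ^ (q - 1 - i))) *
      cyclotomic (2 * (p * q)) ℤ = X ^ (2 * (p * q)) - 1 := by
  rw [B_eq q hq hq2]
  have hnd : ¬ p ∣ 2 * q := by
    intro h
    rcases (Nat.Prime.dvd_mul hp).mp h with h | h
    · exact hp2 ((Nat.prime_dvd_prime_iff_eq hp Nat.prime_two).mp h)
    · exact hne ((Nat.prime_dvd_prime_iff_eq hp hq).mp h)
  have hexp := cyclotomic_expand_eq_cyclotomic_mul hp hnd ℤ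
  have key : (expand ℤ p) (cyclotomic (2 * q) ℤ * (X + 1)) = X ^ (p * q) + 1 := by
    rw [two_q_aux q hq hq2, map_add, map_one, map_pow, expand_X, ← pow_mul]
  rw [map_mul, hexp, map_add, map_one, expand_X] at key
  -- key : cyclotomic (2*q*p) ℤ * cyclotomic (2*q) ℤ * (X^p + 1) = X^(p*q) + 1
  have h2 : 2 * q * p = 2 * (p * q) := by ring
  rw [h2] at key
  calc ((X ^ (p * q) - 1) * ((X ^ p + 1) * cyclotomic (2 * q) ℤ)) * cyclotomic (2 * (p * q)) ℤ
      = (cyclotomic (2 * (p * q)) ℤ * cyclotomic (2 * q) ℤ * (X ^ p + 1)) * (X ^ (p * q) - 1) := by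
        ring
    _ = (X ^ (p * q) + 1) * (X ^ (p * q) - 1) := by rw [key]
    _ = X ^ (2 * (p * q)) - 1 := by rw [mul_comm 2 (p * q), pow_mul]; ring

private lemma coeff_one_mem (k : ℕ) : ∀ _ : True, ((1 : ℤ[X]).coeff k = 0 ∨ (1 : ℤ[X]).coeff k = 1) := by
  intro _
  rw [Polynomial.coeff_one]
  split_ifs <;> simp

theorem stmt_15 (n : ℕ) (hn : 0 < n) (hsq : Squarefree n)
    (hodd : (n.primeFactors.filter (· ≠ 2)).card ≤ 2)
    (Ψ : Polynomial ℤ) (hΨ : Ψ * Polynomial.cyclotomic n ℤ = X ^ n - 1) (k : ℕ) :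
    Ψ.coeff k ∈ ({-1, 0, 1} : Set ℤ) := by
  have cancel : ∀ A : ℤ[X], A * cyclotomic n ℤ = X ^ n - 1 → Ψ = A := by
    intro A hA
    exact mul_right_cancel₀ (cyclotomic_ne_zero n ℤ) (hΨ.trans hA.symm)
  have hone : ∀ k, (1 : ℤ[X]).coeff k = 0 ∨ (1 : ℤ[X]).coeff k = 1 := by
    intro j; rw [Polynomial.coeff_one]; split_ifs <;> simp
  -- prime case helper
  have prime_case : ∀ p : ℕ, p.Prime → n = p → Ψ.coeff k ∈ ({-1, 0, 1} : Set ℤ) := by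
    intro p hp hnp
    subst hnp
    haveI := Fact.mk hp
    have hid : ((X ^ 1 - 1) * 1 : ℤ[X]) * cyclotomic n ℤ = X ^ n - 1 := by
      rw [pow_one, mul_one, mul_comm, cyclotomic_prime_mul_X_sub_one]
    rw [cancel _ hid]
    exact helper1 1 1 hone k
  set s := n.primeFactors with hs
  set t := s.filter (· ≠ 2) with ht
  have hprod : ∏ r ∈ s, r = n := Nat.prod_primeFactors_of_squarefree hsq
  have hmem_t : ∀ r ∈ t, r.Prime ∧ r ≠ 2 := by
    intro r hr
    rw [ht, Finset.mem_filter] at hr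
    exact ⟨Nat.prime_of_mem_primeFactors hr.1, by simpa using hr.2⟩
  have h2nt : (2 : ℕ) ∉ t := by simp [ht, Finset.mem_filter]
  have hst : s = if 2 ∈ s then insert 2 t else t := by
    split_ifs with h2
    · ext r
      simp only [ht, Finset.mem_insert, Finset.mem_filter]
      constructor
      · intro hr
        by_cases hr2 : r = 2
        · left; exact hr2
        · right; exact ⟨hr, by simpa using hr2⟩
      · rintro (rfl | ⟨hr, _⟩) <;> assumption
    · ext r
      simp only [ht, Finset.mem_filter]
      constructor
      · intro hr
        refine ⟨hr, ?_⟩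
        simp only [ne_eq, decide_not]
        intro hr2
        have : r = 2 := by simpa using hr2
        exact h2 (this ▸ hr)
      · exact fun hr => hr.1
  have hcases : t.card = 0 ∨ t.card = 1 ∨ t.card = 2 := by omega
  rcases hcases with hc | hc | hc
  · -- t empty : n = 1 or 2
    have htE : t = ∅ := Finset.card_eq_zero.mp hc
    rw [htE] at hst
    by_cases h2 : 2 ∈ s
    · rw [if_pos h2] at hst
      have hn2 : n = 2 := by
        rw [← hprod, hst]; simp
      exact prime_case 2 Nat.prime_two hn2
    · rw [if_neg h2] at hst
      have hn1 : n = 1 := by rw [← hprod, hst]; simp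
      subst hn1
      have hid : (1 : ℤ[X]) * cyclotomic 1 ℤ = X ^ 1 - 1 := by
        rw [cyclotomic_one, one_mul, pow_one]
      rw [cancel _ hid, Polynomial.coeff_one]
      split_ifs <;> simp
  · -- t = {p}
    obtain ⟨p, hpt⟩ := Finset.card_eq_one.mp hc
    obtain ⟨hp, hp2⟩ := hmem_t p (by rw [hpt]; exact Finset.mem_singleton_self p)
    haveI := Fact.mk hp
    rw [hpt] at hst
    by_cases h2 : 2 ∈ s
    · rw [if_pos h2] at hst
      have hn2p : n = 2 * p := by
        rw [← hprod, hst, Finset.prod_insert (by simp [Ne.symm hp2]), Finset.prod_singleton]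
      subst hn2p
      have hid := case_pq 2 p Nat.prime_two hp (fun h => hp2 h.symm)
      rw [cancel _ hid]
      refine helper1 2 (cyclotomic p ℤ) ?_ k
      intro j
      rw [cyclotomic_prime, coeff_geom]
      split_ifs <;> simp
    · rw [if_neg h2] at hst
      have hnp : n = p := by rw [← hprod, hst, Finset.prod_singleton]
      exact prime_case p hp hnp
  · -- t = {p, q}
    obtain ⟨p, q, hpq, hpt⟩ := Finset.card_eq_two.mp hc
    obtain ⟨hp, hp2⟩ := hmem_t p (by rw [hpt]; simp)
    obtain ⟨hq, hq2⟩ := hmem_t q (by rw [hpt]; simp)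
    haveI := Fact.mk hp
    haveI := Fact.mk hq
    rw [hpt] at hst
    by_cases h2 : 2 ∈ s
    · rw [if_pos h2] at hst
      have hn : n = 2 * (p * q) := by
        rw [← hprod, hst, Finset.prod_insert (by simp [Ne.symm hp2, Ne.symm hq2]),
          Finset.prod_pair hpq]
      subst hn
      have hid := case_2pq p q hp hq hp2 hq2 hpq
      rw [cancel _ hid]
      refine helper2 (p * q) _ ?_ ?_ k
      · exact S_mem p q (hp.odd_of_ne_two hp2)
      · intro j hj; exact S_vanish p q hp.two_le hq.two_le j hj
    · rw [if_neg h2] at hst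
      have hn : n = p * q := by
        rw [← hprod, hst, Finset.prod_pair hpq]
      subst hn
      have hid := case_pq p q hp hq hpq
      rw [cancel _ hid]
      refine helper1 p (cyclotomic q ℤ) ?_ k
      intro j
      rw [cyclotomic_prime, coeff_geom]
      split_ifs <;> simp
end

section
/- Let p < q be distinct primes. Then Ψ_{pq}(x) = -1 - x - ... - x^{p-1} + x^q + x^{q+1} + ... + x^{p+q-1}. -/
open Polynomial Finset

theorem stmt_16 (p q : ℕ) (hp : p.Prime) (hq : q.Prime) (hpq : p < q) :
    (∑ i ∈ range p, (X : Polynomial ℤ) ^ (q + i) - ∑ i ∈ range p, X ^ i) *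
        Polynomial.cyclotomic (p * q) ℤ = X ^ (p * q) - 1 := by
  haveI : Fact p.Prime := ⟨hp⟩
  haveI : Fact q.Prime := ⟨hq⟩
  have hp1 : p ≠ 1 := hp.ne_one
  have hq1 : q ≠ 1 := hq.ne_one
  have hne : p ≠ q := hpq.ne
  have hd : (p * q).divisors = {1, p, q, p * q} := by
    rw [Nat.divisors_mul, hp.divisors, hq.divisors]
    ext n
    simp only [Finset.mem_mul, Finset.mem_insert, Finset.mem_singleton]
    constructor
    · rintro ⟨a, (rfl | rfl), b, (rfl | rfl), rfl⟩ <;> simp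
    · rintro (rfl | h | h | h)
      exacts [⟨1, Or.inl rfl, 1, Or.inl rfl, by ring⟩,
        ⟨p, Or.inr rfl, 1, Or.inl rfl, by rw [h, mul_one]⟩,
        ⟨1, Or.inl rfl, q, Or.inr rfl, by rw [h, one_mul]⟩,
        ⟨p, Or.inr rfl, q, Or.inr rfl, h.symm⟩]
  have hprod := prod_cyclotomic_eq_X_pow_sub_one (n := p * q)
    (Nat.mul_pos hp.pos hq.pos) ℤ
  rw [hd] at hprod
  have h1p : (1 : ℕ) ≠ p := fun h => hp1 h.symm
  have h1q : (1 : ℕ) ≠ q := fun h => hq1 h.symm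
  have h1pq : (1 : ℕ) ≠ p * q :=
    (lt_of_lt_of_le hp.one_lt (Nat.le_mul_of_pos_right p hq.pos)).ne
  have hppq : p ≠ p * q := (lt_mul_of_one_lt_right hp.pos hq.one_lt).ne
  have hqpq : q ≠ p * q := (lt_mul_of_one_lt_left hq.pos hp.one_lt).ne
  rw [Finset.prod_insert (by simp [h1p, h1q, h1pq]),
    Finset.prod_insert (by simp [hne, hppq]),
    Finset.prod_insert (by simp [hqpq]), Finset.prod_singleton] at hprod
  have e1 : cyclotomic 1 ℤ = X - 1 := cyclotomic_one ℤ
  have ep : cyclotomic p ℤ = ∑ i ∈ range p, X ^ i := cyclotomic_prime ℤ p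
  have eq' : cyclotomic q ℤ = ∑ i ∈ range q, X ^ i := cyclotomic_prime ℤ q
  have key : ((∑ i ∈ range p, (X : Polynomial ℤ) ^ (q + i)) - ∑ i ∈ range p, X ^ i)
      = (X ^ q - 1) * ∑ i ∈ range p, X ^ i := by
    rw [sub_mul, one_mul, Finset.mul_sum]
    congr 1
    exact Finset.sum_congr rfl fun i _ => pow_add X q i
  have geom : ((X : Polynomial ℤ) - 1) * ∑ i ∈ range q, X ^ i = X ^ q - 1 := by
    have := geom_sum_mul (X : Polynomial ℤ) q
    linear_combination this
  rw [key, ← geom]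
  rw [e1, ep, eq'] at hprod
  linear_combination hprod
end

section
/- Let v > 3 be coprime to 3 with v ≡ 1 (mod 3). Then τ_{3,v}(x) = (1-x)(1 + x^3 + x^6 + ... + x^{v-1}) + x^v + (x-1)(x^{v+1} + x^{v+4} + ... + x^{2v-3}). -/
open Polynomial Finset

theorem stmt_18 (v : ℕ) (hv : 3 < v) (hcop : Nat.Coprime 3 v) (hv1 : v % 3 = 1)
    (τ : Polynomial ℤ)
    (hτ : τ * ((X ^ 3 - 1) * (X ^ v - 1)) = (X - 1) * (X ^ (3 * v) - 1)) :
    τ = (1 - X) * (∑ i ∈ range ((v - 1) / 3 + 1), X ^ (3 * i)) + X ^ v +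
        (X - 1) * (∑ i ∈ range ((v - 1) / 3), X ^ (v + 1 + 3 * i)) := by
  obtain ⟨k, rfl⟩ : ∃ k, v = 3 * k + 1 := ⟨v / 3, by omega⟩
  have hne : ((X : ℤ[X]) ^ 3 - 1) * (X ^ (3 * k + 1) - 1) ≠ 0 := by
    apply mul_ne_zero <;>
    · simpa using Polynomial.X_pow_sub_C_ne_zero (by omega) (1 : ℤ)
  apply mul_right_cancel₀ hne
  rw [hτ]
  have h1 : (3 * k + 1 - 1) / 3 = k := by omega
  rw [h1]
  have s1 : ∑ i ∈ range (k + 1), (X : ℤ[X]) ^ (3 * i)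
      = ∑ i ∈ range (k + 1), ((X : ℤ[X]) ^ 3) ^ i := by
    simp [pow_mul]
  have s2 : ∑ i ∈ range k, (X : ℤ[X]) ^ (3 * k + 1 + 1 + 3 * i)
      = X ^ (3 * k + 2) * ∑ i ∈ range k, ((X : ℤ[X]) ^ 3) ^ i := by
    rw [mul_sum]
    apply Finset.sum_congr rfl
    intro i _
    rw [← pow_mul, ← pow_add]
  rw [s1, s2]
  have g1 : (∑ i ∈ range (k + 1), ((X : ℤ[X]) ^ 3) ^ i) * (X ^ 3 - 1)
      = ((X : ℤ[X]) ^ 3) ^ (k + 1) - 1 := geom_sum_mul _ _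
  have g2 : (∑ i ∈ range k, ((X : ℤ[X]) ^ 3) ^ i) * (X ^ 3 - 1)
      = ((X : ℤ[X]) ^ 3) ^ k - 1 := geom_sum_mul _ _
  linear_combination (-(1 - X) * (X ^ (3 * k + 1) - 1)) * g1 +
    (-(X - 1) * X ^ (3 * k + 2) * (X ^ (3 * k + 1) - 1)) * g2
end

section
/- Let p and q be distinct primes with q ≠ 2, and let p* be the unique integer with 1 ≤ p* < q and p·p* ≡ 1 (mod q). Then every coefficient c of the polynomial Φ_{pq}(x)·Φ_{p^2}(x) satisfies -min(q - p*, p) ≤ c ≤ min(p*, p). -/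
open Polynomial Finset

/-! Auxiliary machinery for bounding coefficients of `Φ_{pq} * Φ_{p²}`. -/

def Vf (q : ℕ) (c j : ℤ) : ℤ := (c - j) % (q : ℤ) + j

lemma Vf_mono (q : ℕ) (hq : 0 < q) (c : ℤ) : Monotone (Vf q c) := by
  intro j j' hjj
  have hd1 : (q:ℤ) ∣ ((c - j') % q - (c - j')) := ⟨-((c - j') / q), by rw [Int.emod_def]; ring⟩
  have hd2 : (q:ℤ) ∣ ((c - j) % q - (c - j)) := ⟨-((c - j) / q), by rw [Int.emod_def]; ring⟩
  have hd : (q:ℤ) ∣ (Vf q c j' - Vf q c j) := by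
    have h : Vf q c j' - Vf q c j = ((c - j') % q - (c - j')) - ((c - j) % q - (c - j)) := by
      unfold Vf; ring
    rw [h]; exact dvd_sub hd1 hd2
  obtain ⟨e, he⟩ := hd
  have hqz : (0:ℤ) < q := by exact_mod_cast hq
  have l1 : 0 ≤ (c - j') % q := Int.emod_nonneg _ (by positivity)
  have l2 : (c - j) % q < q := Int.emod_lt_of_pos _ hqz
  have hgt : Vf q c j' - Vf q c j > -q := by unfold Vf at *; omega
  rw [he] at hgt
  have : 0 ≤ e := by nlinarith
  rw [← sub_nonneg, he]
  positivity

lemma Vf_shift (q : ℕ) (c j : ℤ) : Vf q c (j + q) = Vf q c j + q := by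
  unfold Vf
  have h : c - (j + q) = c - j - q := by ring
  rw [h, ← Int.emod_eq_sub_self_emod]
  ring

noncomputable def cnt (p q : ℕ) (c a m : ℤ) : ℕ :=
  ((Finset.Ico a (a + p)).filter (fun j => (p:ℤ) * Vf q c j ≤ m)).card

lemma cnt_le (p q : ℕ) (c a m : ℤ) : cnt p q c a m ≤ p := by
  calc cnt p q c a m ≤ (Finset.Ico a (a + p)).card := Finset.card_filter_le _ _
  _ = p := by rw [Int.card_Ico]; omega

lemma cnt_mono (p q : ℕ) (c a : ℤ) {m m' : ℤ} (h : m ≤ m') : cnt p q c a m ≤ cnt p q c a m' := by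
  apply Finset.card_le_card
  intro j hj
  simp only [Finset.mem_filter] at hj ⊢
  exact ⟨hj.1, hj.2.trans h⟩

lemma cnt_sub (p q : ℕ) (c m : ℤ) {a b : ℤ} (hab : a ≤ b) :
    cnt p q c a m ≤ cnt p q c b m + (b - a).toNat := by
  by_cases hba : b ≤ a + p
  · have hsplit : Finset.Ico a (a + p) = Finset.Ico a b ∪ Finset.Ico b (a + p) :=
      (Finset.Ico_union_Ico_eq_Ico hab hba).symm
    have h0 : cnt p q c a m ≤ ((Finset.Ico a b).filter (fun j => (p:ℤ) * Vf q c j ≤ m)).card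
        + ((Finset.Ico b (a+p)).filter (fun j => (p:ℤ) * Vf q c j ≤ m)).card := by
      unfold cnt
      rw [hsplit, Finset.filter_union]
      exact Finset.card_union_le _ _
    refine h0.trans ?_
    have h1 : ((Finset.Ico a b).filter (fun j => (p:ℤ) * Vf q c j ≤ m)).card ≤ (b - a).toNat := by
      calc _ ≤ (Finset.Ico a b).card := Finset.card_filter_le _ _
      _ = (b - a).toNat := Int.card_Ico _ _
    have h2 : ((Finset.Ico b (a+p)).filter (fun j => (p:ℤ) * Vf q c j ≤ m)).card ≤ cnt p q c b m :=
      Finset.card_le_card (Finset.filter_subset_filter _ (Finset.Ico_subset_Ico le_rfl (by omega)))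
    omega
  · have h1 := cnt_le p q c a m
    have h2 : (b - a).toNat ≥ p := by omega
    omega

lemma cnt_shift (p q : ℕ) (c a m : ℤ) : cnt p q c a m = cnt p q c (a + q) (m + p * q) := by
  unfold cnt
  refine Finset.card_nbij' (fun j => j + (q:ℤ)) (fun j => j - (q:ℤ)) ?_ ?_ ?_ ?_
  · intro j hj
    simp only [Finset.mem_coe, Finset.mem_filter, Finset.mem_Ico] at hj ⊢
    refine ⟨by omega, ?_⟩
    rw [Vf_shift]
    nlinarith [hj.2]
  · intro j hj
    simp only [Finset.mem_coe, Finset.mem_filter, Finset.mem_Ico] at hj ⊢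
    have hv : Vf q c j = Vf q c (j - q) + q := by
      have h := Vf_shift q c (j - q); rw [sub_add_cancel] at h; omega
    refine ⟨by omega, ?_⟩
    rw [hv] at hj
    nlinarith [hj.2]
  · intro a ha; simp only []; omega
  · intro a ha; simp only []; omega

def grd (p q : ℕ) : Finset (ℕ × ℕ) := Finset.range q ×ˢ Finset.range p

def Nc (p q n : ℕ) : ℕ := ((grd p q).filter (fun ij => p * (ij.1 + ij.2) = n)).card

def S0 (p q k : ℕ) : Finset (ℕ × ℕ) :=
  (grd p q).filter (fun ij => p * (ij.1 + ij.2) ≤ k ∧ p * (ij.1 + ij.2) % q = k % q)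

def S1 (p q k : ℕ) : Finset (ℕ × ℕ) :=
  (grd p q).filter (fun ij => p * (ij.1 + ij.2) + 1 ≤ k ∧ (p * (ij.1 + ij.2) + 1) % q = k % q)

lemma modsplit {q m k : ℕ} (hq : 0 < q) (hk : q ≤ k) :
    (m ≤ k ∧ m % q = k % q) ↔ ((m ≤ k - q ∧ m % q = (k - q) % q) ∨ m = k) := by
  have hmod : (k - q) % q = k % q := by
    conv_rhs => rw [show k = (k - q) + q by omega]
    rw [Nat.add_mod_right]
  constructor
  · rintro ⟨hle, hm⟩
    rcases eq_or_lt_of_le hle with h | h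
    · exact Or.inr h
    · left
      obtain ⟨e, he⟩ := (Nat.modEq_iff_dvd' h.le).mp hm
      have h0 : e ≠ 0 := by rintro rfl; omega
      have h1 : q ≤ q * e := Nat.le_mul_of_pos_right q (by omega)
      exact ⟨by omega, by rw [hmod]; exact hm⟩
  · rintro (⟨hle, hm⟩ | rfl)
    · exact ⟨by omega, by rw [← hmod]; exact hm⟩
    · exact ⟨le_rfl, rfl⟩

lemma S0_card_rec {p q k : ℕ} (hq : 0 < q) (hk : q ≤ k) :
    (S0 p q k).card = (S0 p q (k - q)).card + Nc p q k := by
  have hsplit : S0 p q k = S0 p q (k - q) ∪ (grd p q).filter (fun ij => p * (ij.1 + ij.2) = k) := by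
    unfold S0
    rw [← Finset.filter_or]
    exact Finset.filter_congr (fun ij _ => by simpa using modsplit hq hk)
  rw [hsplit, Finset.card_union_of_disjoint, Nc]
  rw [Finset.disjoint_left]
  intro ij h1 h2
  simp only [S0, Finset.mem_filter] at h1 h2
  omega

lemma S1_card_rec {p q k : ℕ} (hq : 0 < q) (hk : q ≤ k) :
    (S1 p q k).card = (S1 p q (k - q)).card + Nc p q (k - 1) := by
  have hsplit : S1 p q k = S1 p q (k - q) ∪ (grd p q).filter (fun ij => p * (ij.1 + ij.2) = k - 1) := by
    unfold S1
    rw [← Finset.filter_or]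
    refine Finset.filter_congr (fun ij _ => ?_)
    have h := modsplit (m := p * (ij.1 + ij.2) + 1) hq hk
    constructor
    · intro hx
      rcases h.mp hx with h' | h'
      · exact Or.inl h'
      · exact Or.inr (by omega)
    · intro hx
      rcases hx with h' | h'
      · exact h.mpr (Or.inl h')
      · exact h.mpr (Or.inr (by omega))
  rw [hsplit, Finset.card_union_of_disjoint, Nc]
  rw [Finset.disjoint_left]
  intro ij h1 h2
  simp only [S1, Finset.mem_filter] at h1 h2
  omega

lemma S0_card_base {p q k : ℕ} (hq : 0 < q) (hk : k < q) :
    (S0 p q k).card = Nc p q k := by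
  unfold S0 Nc
  congr 1
  refine Finset.filter_congr (fun ij _ => ?_)
  have h1 : p * (ij.1 + ij.2) ≤ k → p * (ij.1 + ij.2) % q = p * (ij.1 + ij.2) :=
    fun h => Nat.mod_eq_of_lt (by omega)
  have h2 : k % q = k := Nat.mod_eq_of_lt hk
  constructor
  · rintro ⟨ha, hb⟩; rw [h1 ha, h2] at hb; exact hb
  · rintro rfl; exact ⟨le_rfl, rfl⟩

lemma S1_card_base {p q k : ℕ} (hq : 0 < q) (h1k : 1 ≤ k) (hk : k < q) :
    (S1 p q k).card = Nc p q (k - 1) := by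
  unfold S1 Nc
  congr 1
  refine Finset.filter_congr (fun ij _ => ?_)
  have h2 : k % q = k := Nat.mod_eq_of_lt hk
  constructor
  · rintro ⟨ha, hb⟩
    rw [Nat.mod_eq_of_lt (by omega), h2] at hb
    omega
  · intro h; constructor
    · omega
    · rw [Nat.mod_eq_of_lt (by omega), h2]; omega

lemma S1_card_zero {p q : ℕ} : (S1 p q 0).card = 0 := by
  unfold S1
  rw [Finset.card_eq_zero, Finset.filter_eq_empty_iff]
  intro ij _
  simp

noncomputable def Bp (p q : ℕ) : ℤ[X] := (∑ i ∈ range q, X ^ (p * i)) * (∑ j ∈ range p, X ^ (p * j))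

lemma Bp_coeff (p q n : ℕ) : (Bp p q).coeff n = (Nc p q n : ℤ) := by
  have hB : Bp p q = ∑ ij ∈ grd p q, X ^ (p * (ij.1 + ij.2)) := by
    unfold Bp grd
    rw [Finset.sum_mul_sum, Finset.sum_product]
    refine Finset.sum_congr rfl fun i _ => Finset.sum_congr rfl fun j _ => ?_
    rw [← pow_add, mul_add]
  rw [hB, finset_sum_coeff]
  simp only [coeff_X_pow]
  rw [Nc, Finset.card_filter]
  push_cast
  exact Finset.sum_congr rfl fun ij _ => by simp [eq_comm]

lemma cyc_identity (p q : ℕ) (hp : p.Prime) (hq : q.Prime) (hpq : p ≠ q) :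
    (cyclotomic (p * q) ℤ * cyclotomic (p ^ 2) ℤ) * (X ^ q - 1) = (X - 1) * Bp p q := by
  haveI : Fact q.Prime := ⟨hq⟩
  have hdiv : ¬ p ∣ q := fun h => hpq ((Nat.prime_dvd_prime_iff_eq hp hq).mp h)
  have h1 : (expand ℤ p) (cyclotomic q ℤ) = cyclotomic (q * p) ℤ * cyclotomic q ℤ :=
    cyclotomic_expand_eq_cyclotomic_mul hp hdiv ℤ
  have h2 : (expand ℤ p) (cyclotomic q ℤ) = ∑ i ∈ range q, X ^ (p * i) := by
    rw [cyclotomic_prime ℤ q, map_sum]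
    refine Finset.sum_congr rfl fun i _ => ?_
    rw [map_pow, expand_X, ← pow_mul, mul_comm]
  have h3 : cyclotomic (p ^ 2) ℤ = ∑ j ∈ range p, X ^ (p * j) := by
    have h := cyclotomic_prime_pow_eq_geom_sum (R := ℤ) (n := 1) hp
    rw [h]
    refine Finset.sum_congr rfl fun i _ => ?_
    rw [← pow_mul, pow_one]
  have h4 : (X : ℤ[X]) ^ q - 1 = (X - 1) * ∑ i ∈ range q, X ^ i := by
    rw [mul_comm, geom_sum_mul]
  rw [Bp, h4, ← h2, h1, ← cyclotomic_prime ℤ q, h3, mul_comm q p]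
  ring

lemma Acoeff_rec (p q : ℕ) (hp : p.Prime) (hq : q.Prime) (hpq : p ≠ q) (k : ℕ) :
    (cyclotomic (p * q) ℤ * cyclotomic (p ^ 2) ℤ).coeff k
      = (if q ≤ k then (cyclotomic (p * q) ℤ * cyclotomic (p ^ 2) ℤ).coeff (k - q) else 0)
        + (Bp p q).coeff k - (if 1 ≤ k then (Bp p q).coeff (k - 1) else 0) := by
  have hAB := cyc_identity p q hp hq hpq
  have h := congrArg (fun P => P.coeff k) hAB
  rw [mul_sub, mul_one, coeff_sub, coeff_mul_X_pow'] at h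
  rw [sub_mul, one_mul, coeff_sub, mul_comm (X : ℤ[X]) (Bp p q), ← pow_one (X : ℤ[X]),
    coeff_mul_X_pow'] at h
  linarith [h]

lemma Acoeff_eq (p q : ℕ) (hp : p.Prime) (hq : q.Prime) (hpq : p ≠ q) (k : ℕ) :
    (cyclotomic (p * q) ℤ * cyclotomic (p ^ 2) ℤ).coeff k
      = ((S0 p q k).card : ℤ) - ((S1 p q k).card : ℤ) := by
  induction k using Nat.strong_induction_on with
  | _ k ih =>
    rw [Acoeff_rec p q hp hq hpq k]
    by_cases hk : q ≤ k
    · rw [if_pos hk, if_pos (show 1 ≤ k by have := hq.two_le; omega),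
        ih (k - q) (by have := hq.pos; omega), Bp_coeff, Bp_coeff,
        S0_card_rec hq.pos hk, S1_card_rec hq.pos hk]
      push_cast
      ring
    · rw [if_neg hk]
      by_cases hk1 : 1 ≤ k
      · rw [if_pos hk1, Bp_coeff, Bp_coeff, S0_card_base hq.pos (by omega),
          S1_card_base hq.pos hk1 (by omega)]
        push_cast
        ring
      · have hk0 : k = 0 := by omega
        subst hk0
        rw [if_neg (by omega), Bp_coeff, S0_card_base hq.pos hq.pos, S1_card_zero]
        push_cast
        ring
lemma S0_cnt (p q pstar k : ℕ) (hq : 0 < q)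
    (h3 : (p : ℤ) * pstar ≡ 1 [ZMOD q]) :
    (S0 p q k).card = cnt p q ((k : ℤ) * pstar) 0 (k : ℤ) := by
  set c : ℤ := (k : ℤ) * pstar with hc
  have hqz : (0:ℤ) < q := by exact_mod_cast hq
  -- key fact about members of S0
  have key : ∀ ij : ℕ × ℕ, ij ∈ S0 p q k → ((c - ij.2) % q = (ij.1 : ℤ)) := by
    rintro ⟨i, j⟩ hij
    simp only [S0, grd, Finset.mem_filter, Finset.mem_product, Finset.mem_range] at hij
    obtain ⟨⟨hi, hj⟩, hle, hmod⟩ := hij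
    have hmodZ : ((p : ℤ) * (i + j)) ≡ (k : ℤ) [ZMOD q] := by
      have := Int.natCast_modEq_iff.mpr (hmod : p * (i + j) ≡ k [MOD q])
      push_cast at this
      convert this using 2 <;> push_cast <;> ring
    have hij2 : ((i : ℤ) + j) ≡ c [ZMOD q] := by
      calc ((i : ℤ) + j) = 1 * ((i:ℤ) + j) := by ring
      _ ≡ ((p:ℤ) * pstar) * ((i:ℤ)+j) [ZMOD q] := (Int.ModEq.mul_right _ h3.symm)
      _ = (pstar : ℤ) * ((p:ℤ) * ((i:ℤ)+j)) := by ring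
      _ ≡ (pstar : ℤ) * k [ZMOD q] := Int.ModEq.mul_left _ hmodZ
      _ = c := by rw [hc]; ring
    have h4 : (c - j) ≡ (i : ℤ) [ZMOD q] := by
      have := hij2.symm.sub_right (j : ℤ)
      simpa using this
    have : (c - j) % q = (i : ℤ) % q := h4
    rw [this, Int.emod_eq_of_lt (by positivity) (by exact_mod_cast hi)]
  unfold cnt
  refine Finset.card_nbij' (fun ij => ((ij.2 : ℕ) : ℤ))
    (fun j => ((((c - j) % q).toNat), j.toNat)) ?_ ?_ ?_ ?_
  · rintro ⟨i, j⟩ hij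
    have hk := key (i, j) hij
    simp only [S0, grd, Finset.mem_coe, Finset.mem_filter, Finset.mem_product, Finset.mem_range] at hij
    obtain ⟨⟨hi, hj⟩, hle, hmod⟩ := hij
    simp only [Finset.mem_coe, Finset.mem_filter, Finset.mem_Ico]
    refine ⟨⟨by positivity, by exact_mod_cast (by omega : (j:ℤ) < 0 + p)⟩, ?_⟩
    unfold Vf
    rw [hk]
    exact_mod_cast (by exact_mod_cast hle : ((p * (i + j) : ℕ) : ℤ) ≤ k)
  · rintro j hj
    simp only [Finset.mem_coe, Finset.mem_filter, Finset.mem_Ico] at hj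
    obtain ⟨⟨hj0, hjp⟩, hcond⟩ := hj
    unfold Vf at hcond
    have he0 : 0 ≤ (c - j) % q := Int.emod_nonneg _ (by positivity)
    have heq : (c - j) % q < q := Int.emod_lt_of_pos _ hqz
    simp only [S0, grd, Finset.mem_coe, Finset.mem_filter, Finset.mem_product, Finset.mem_range]
    have hcast : ((((c - j) % q).toNat : ℤ)) = (c - j) % q := Int.toNat_of_nonneg he0
    have hjcast : ((j.toNat : ℤ)) = j := Int.toNat_of_nonneg hj0
    refine ⟨⟨by omega, by omega⟩, ?_, ?_⟩
    · have : ((p * (((c - j) % q).toNat + j.toNat) : ℕ) : ℤ) ≤ (k : ℤ) := by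
        push_cast
        rw [hcast, hjcast]
        exact hcond
      exact_mod_cast this
    · -- mod condition
      have hmodZ : ((p:ℤ) * (((c - j) % q) + j)) ≡ (k : ℤ) [ZMOD q] := by
        have h5 : ((c - j) % q) ≡ c - j [ZMOD q] := Int.mod_modEq _ _
        calc (p:ℤ) * (((c - j) % q) + j) ≡ (p:ℤ) * ((c - j) + j) [ZMOD q] :=
          Int.ModEq.mul_left _ (h5.add_right j)
        _ = ((p:ℤ) * pstar) * k := by rw [hc]; ring
        _ ≡ 1 * k [ZMOD q] := Int.ModEq.mul_right _ h3
        _ = (k : ℤ) := by ring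
      have hfin : ((p * (((c - j) % q).toNat + j.toNat) : ℕ) : ℤ) ≡ ((k:ℕ) : ℤ) [ZMOD ((q:ℕ):ℤ)] := by
        push_cast
        rw [hcast, hjcast]
        exact_mod_cast hmodZ
      exact Int.natCast_modEq_iff.mp hfin
  · rintro ⟨i, j⟩ hij
    have hk := key (i, j) hij
    simp only []
    have : ((c - (j:ℤ)) % q).toNat = i := by rw [hk]; simp
    simp [this]
  · rintro j hj
    simp only [Finset.mem_coe, Finset.mem_filter, Finset.mem_Ico] at hj
    simp [Int.toNat_of_nonneg hj.1.1]

lemma S1_cnt (p q pstar k : ℕ) (hq : 0 < q)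
    (h3 : (p : ℤ) * pstar ≡ 1 [ZMOD q]) :
    (S1 p q k).card = cnt p q ((k : ℤ) * pstar) pstar ((k : ℤ) + p * pstar - 1) := by
  set c : ℤ := (k : ℤ) * pstar with hc
  have hqz : (0:ℤ) < q := by exact_mod_cast hq
  have key : ∀ ij : ℕ × ℕ, ij ∈ S1 p q k → ((c - ((ij.2 : ℤ) + pstar)) % q = (ij.1 : ℤ)) := by
    rintro ⟨i, j⟩ hij
    simp only [S1, grd, Finset.mem_filter, Finset.mem_product, Finset.mem_range] at hij
    obtain ⟨⟨hi, hj⟩, hle, hmod⟩ := hij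
    have hmodZ : ((p : ℤ) * (i + j) + 1) ≡ (k : ℤ) [ZMOD q] := by
      have h0 := Int.natCast_modEq_iff.mpr (hmod : p * (i + j) + 1 ≡ k [MOD q])
      push_cast at h0
      exact h0
    have hij2 : ((i : ℤ) + j) ≡ c - pstar [ZMOD q] := by
      calc ((i : ℤ) + j) = 1 * ((i:ℤ) + j) := by ring
      _ ≡ ((p:ℤ) * pstar) * ((i:ℤ)+j) [ZMOD q] := Int.ModEq.mul_right _ h3.symm
      _ = (pstar : ℤ) * ((p:ℤ) * ((i:ℤ)+j) + 1) - pstar := by ring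
      _ ≡ (pstar : ℤ) * k - pstar [ZMOD q] := (Int.ModEq.mul_left _ hmodZ).sub_right _
      _ = c - pstar := by rw [hc]; ring
    have h4 : (c - ((j : ℤ) + pstar)) ≡ (i : ℤ) [ZMOD q] := by
      have h5 := hij2.symm.sub_right (j : ℤ)
      have he : c - pstar - j = c - ((j:ℤ) + pstar) := by ring
      rw [he] at h5
      simpa using h5
    have h6 : (c - ((j:ℤ) + pstar)) % q = (i : ℤ) % q := h4
    rw [h6, Int.emod_eq_of_lt (by positivity) (by exact_mod_cast hi)]
  unfold cnt
  refine Finset.card_nbij' (fun ij => ((ij.2 : ℤ) + pstar))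
    (fun j => ((((c - j) % q).toNat), (j - pstar).toNat)) ?_ ?_ ?_ ?_
  · rintro ⟨i, j⟩ hij
    have hk := key (i, j) hij
    simp only [S1, grd, Finset.mem_coe, Finset.mem_filter, Finset.mem_product, Finset.mem_range] at hij
    obtain ⟨⟨hi, hj⟩, hle, hmod⟩ := hij
    simp only [Finset.mem_coe, Finset.mem_filter, Finset.mem_Ico]
    have hjz : ((j:ℤ)) < p := by exact_mod_cast hj
    refine ⟨⟨by omega, by omega⟩, ?_⟩
    unfold Vf
    simp only at hk
    rw [hk]
    have hleZ : ((p * (i + j) + 1 : ℕ) : ℤ) ≤ (k : ℤ) := by exact_mod_cast hle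
    push_cast at hleZ ⊢
    nlinarith
  · rintro j hj
    simp only [Finset.mem_coe, Finset.mem_filter, Finset.mem_Ico] at hj
    obtain ⟨⟨hj0, hjp⟩, hcond⟩ := hj
    unfold Vf at hcond
    have he0 : 0 ≤ (c - j) % q := Int.emod_nonneg _ (by positivity)
    have heq : (c - j) % q < q := Int.emod_lt_of_pos _ hqz
    simp only [S1, grd, Finset.mem_coe, Finset.mem_filter, Finset.mem_product, Finset.mem_range]
    have hcast : ((((c - j) % q).toNat : ℤ)) = (c - j) % q := Int.toNat_of_nonneg he0
    have hjcast : (((j - pstar).toNat : ℤ)) = j - pstar := Int.toNat_of_nonneg (by omega)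
    refine ⟨⟨by omega, by omega⟩, ?_, ?_⟩
    · have h7 : ((p * (((c - j) % q).toNat + (j - pstar).toNat) + 1 : ℕ) : ℤ) ≤ (k : ℤ) := by
        push_cast
        rw [hcast, hjcast]
        nlinarith
      exact_mod_cast h7
    · have h5 : ((c - j) % q) ≡ c - j [ZMOD q] := Int.mod_modEq _ _
      have hmodZ : ((p:ℤ) * (((c - j) % q) + (j - pstar)) + 1) ≡ (k : ℤ) [ZMOD q] := by
        calc (p:ℤ) * (((c - j) % q) + (j - pstar)) + 1
            ≡ (p:ℤ) * ((c - j) + (j - pstar)) + 1 [ZMOD q] :=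
          (Int.ModEq.mul_left _ (h5.add_right _)).add_right 1
        _ = ((p:ℤ) * pstar) * k - ((p:ℤ) * pstar) + 1 := by rw [hc]; ring
        _ ≡ 1 * k - 1 + 1 [ZMOD q] := ((h3.mul_right _).sub h3).add_right 1
        _ = (k : ℤ) := by ring
      have hfin : ((p * (((c - j) % q).toNat + (j - pstar).toNat) + 1 : ℕ) : ℤ)
          ≡ ((k:ℕ) : ℤ) [ZMOD ((q:ℕ):ℤ)] := by
        push_cast
        rw [hcast, hjcast]
        exact_mod_cast hmodZ
      exact Int.natCast_modEq_iff.mp hfin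
  · rintro ⟨i, j⟩ hij
    have hk := key (i, j) hij
    simp only [] at hk ⊢
    rw [hk]
    simp
  · rintro j hj
    simp only [Finset.mem_coe, Finset.mem_filter, Finset.mem_Ico] at hj
    simp only []
    rw [Int.toNat_of_nonneg (by omega : (0:ℤ) ≤ j - pstar)]
    ring

theorem stmt_19 (p q : ℕ) (hp : p.Prime) (hq : q.Prime) (hpq : p ≠ q) (hq2 : q ≠ 2)
    (pstar : ℕ) (h1 : 1 ≤ pstar) (h2 : pstar < q) (h3 : p * pstar ≡ 1 [MOD q]) (k : ℕ) :
    -(min (q - pstar) p : ℤ) ≤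
        (Polynomial.cyclotomic (p * q) ℤ * Polynomial.cyclotomic (p ^ 2) ℤ).coeff k ∧
      (Polynomial.cyclotomic (p * q) ℤ * Polynomial.cyclotomic (p ^ 2) ℤ).coeff k ≤
        min pstar p := by
  have hppos : 0 < p := hp.pos
  have hqpos : 0 < q := hq.pos
  have h3Z : (p : ℤ) * pstar ≡ 1 [ZMOD q] := by
    have h := Int.natCast_modEq_iff.mpr h3
    push_cast at h
    exact h
  set c : ℤ := (k : ℤ) * pstar with hc
  set g0 := cnt p q c 0 (k : ℤ) with hg0
  set g1 := cnt p q c pstar ((k : ℤ) + p * pstar - 1) with hg1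
  have hkey : (cyclotomic (p * q) ℤ * cyclotomic (p ^ 2) ℤ).coeff k = (g0 : ℤ) - g1 := by
    rw [Acoeff_eq p q hp hq hpq k, S0_cnt p q pstar k hqpos h3Z, S1_cnt p q pstar k hqpos h3Z]
  have hb1 : g0 ≤ p := cnt_le _ _ _ _ _
  have hb2 : g1 ≤ p := cnt_le _ _ _ _ _
  have hpp1 : (1 : ℤ) ≤ (p : ℤ) * pstar := by
    have : (1:ℤ) ≤ p := by exact_mod_cast hppos
    have h' : (1:ℤ) ≤ pstar := by exact_mod_cast h1
    nlinarith
  have hb3 : g0 ≤ g1 + pstar := by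
    have e1 : g0 ≤ cnt p q c pstar (k : ℤ) + ((pstar : ℤ) - 0).toNat :=
      cnt_sub p q c (k : ℤ) (by positivity)
    have e2 : cnt p q c pstar (k : ℤ) ≤ g1 := cnt_mono p q c pstar (by omega)
    have e3 : ((pstar : ℤ) - 0).toNat = pstar := by omega
    omega
  have hb4 : g1 ≤ g0 + (q - pstar) := by
    have e1 : cnt p q c ((pstar : ℤ) - q) ((k : ℤ) + p * pstar - 1 - p * q) = g1 := by
      rw [cnt_shift p q c ((pstar : ℤ) - q) ((k : ℤ) + p * pstar - 1 - p * q)]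
      congr 1 <;> ring
    have e2 : cnt p q c ((pstar : ℤ) - q) ((k : ℤ) + p * pstar - 1 - p * q)
        ≤ cnt p q c ((pstar : ℤ) - q) (k : ℤ) := by
      apply cnt_mono
      have hps : (pstar : ℤ) ≤ q := by exact_mod_cast h2.le
      have hp0 : (0 : ℤ) ≤ p := by positivity
      nlinarith
    have e3 : cnt p q c ((pstar : ℤ) - q) (k : ℤ) ≤ g0 + ((0 : ℤ) - ((pstar : ℤ) - q)).toNat := by
      exact cnt_sub p q c (k : ℤ) (by omega)
    have e4 : ((0 : ℤ) - ((pstar : ℤ) - q)).toNat = q - pstar := by omega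
    omega
  rw [hkey]
  constructor
  · have : ((q - pstar : ℕ) : ℤ) = (q : ℤ) - pstar := by
      rw [Nat.cast_sub h2.le]
    push_cast [Nat.cast_min]
    omega
  · push_cast [Nat.cast_min]
    omega
end
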